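/- arXiv:math/0112288 — 7 statements merged into one kernel-verified Lean document; each statement's English description precedes it below -/
import Mathlib

section
/- If δ is a limit ordinal, u is a club (closed unbounded) subset of δ, and E ∩ δ is club in δ, then drop(u,E) is club in δ. -/
open Cardinal Set

/-- `drop u E = {sup (E ∩ α) : α ∈ u, α > min E}`. -/
def drop (u E : Set Ordinal) : Set Ordinal :=
  {o | ∃ α ∈ u, sInf E < α ∧ o = sSup (E ∩ Set.Iio α)}

/-- `C` is club in `δ`: a subset of `δ`, unbounded in `δ`, and closed
(any nonzero `α < δ` which is a supremum of elements of `C` below it lies in `C`). -/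
def IsClubIn (C : Set Ordinal) (δ : Ordinal) : Prop :=
  C ⊆ Set.Iio δ ∧ (∀ α < δ, ∃ β ∈ C, α ≤ β) ∧
    (∀ α < δ, α ≠ 0 → sSup (C ∩ Set.Iio α) = α → α ∈ C)

lemma bdd_of_subset_Iio {s : Set Ordinal} {γ : Ordinal} (h : s ⊆ Set.Iio γ) :
    BddAbove s := ⟨γ, fun _ hb => le_of_lt (h hb)⟩

lemma key (δ : Ordinal) (hδ : Order.IsSuccLimit δ) (E : Set Ordinal)
    (hE : IsClubIn (E ∩ Set.Iio δ) δ) {α : Ordinal} (hαδ : α < δ)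
    (hinf : sInf E < α) : sSup (E ∩ Set.Iio α) ∈ E ∩ Set.Iio δ := by
  obtain ⟨β, hβ, -⟩ := hE.2.1 0 hδ.pos
  have hEne : E.Nonempty := ⟨β, hβ.1⟩
  have hinfE : sInf E ∈ E := csInf_mem hEne
  have hmem : sInf E ∈ E ∩ Set.Iio α := ⟨hinfE, hinf⟩
  set o := sSup (E ∩ Set.Iio α) with ho
  have hbdd : BddAbove (E ∩ Set.Iio α) := bdd_of_subset_Iio (fun b hb => hb.2)
  have hoα : o ≤ α := csSup_le' (fun b hb => le_of_lt hb.2)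
  have hoδ : o < δ := lt_of_le_of_lt hoα hαδ
  have hio : sInf E ≤ o := le_csSup hbdd hmem
  by_cases hoe : o ∈ E
  · exact ⟨hoe, hoδ⟩
  · have ho0 : o ≠ 0 := by
      intro h0
      apply hoe
      have : sInf E = 0 := le_antisymm (h0 ▸ hio) (zero_le (a := sInf E))
      rw [h0, ← this]; exact hinfE
    have hset : E ∩ Set.Iio δ ∩ Set.Iio o = E ∩ Set.Iio α := by
      ext b
      constructor
      · rintro ⟨⟨hb, -⟩, hbo⟩
        exact ⟨hb, lt_of_lt_of_le hbo hoα⟩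
      · rintro ⟨hb, hbα⟩
        have hbo : b ≤ o := le_csSup hbdd ⟨hb, hbα⟩
        have : b ≠ o := fun h => hoe (h ▸ hb)
        exact ⟨⟨hb, lt_trans hbα hαδ⟩, lt_of_le_of_ne hbo this⟩
    exact hE.2.2 o hoδ ho0 (by rw [hset])

/-- If `δ` is a limit ordinal, `u` is club in `δ` and `E ∩ δ` is club in `δ`,
then `drop u E` is club in `δ`. -/
theorem stmt_1 (δ : Ordinal) (hδ : Order.IsSuccLimit δ) (u E : Set Ordinal)
    (hu : IsClubIn u δ) (hE : IsClubIn (E ∩ Set.Iio δ) δ) :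
    IsClubIn (drop u E) δ := by
  obtain ⟨β0, hβ0, -⟩ := hE.2.1 0 hδ.pos
  have hEne : E.Nonempty := ⟨β0, hβ0.1⟩
  have hinfE : sInf E ∈ E := csInf_mem hEne
  refine ⟨?_, ?_, ?_⟩
  · -- subset of Iio δ
    rintro o ⟨γ, hγu, hinf, rfl⟩
    exact (key δ hδ E hE (hu.1 hγu) hinf).2
  · -- unbounded
    intro β hβ
    obtain ⟨e, he, hβe⟩ := hE.2.1 β hβ
    have hsucc : e + 1 < δ := by
      rw [Ordinal.add_one_eq_succ]; exact hδ.succ_lt he.2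
    obtain ⟨γ, hγu, hγe⟩ := hu.2.1 (e + 1) hsucc
    have heγ : e < γ := lt_of_lt_of_le (lt_add_one e) hγe
    have hinf : sInf E < γ := lt_of_le_of_lt (csInf_le' he.1) heγ
    refine ⟨sSup (E ∩ Set.Iio γ), ⟨γ, hγu, hinf, rfl⟩, ?_⟩
    have hbdd : BddAbove (E ∩ Set.Iio γ) := bdd_of_subset_Iio (fun b hb => hb.2)
    exact le_trans hβe (le_csSup hbdd ⟨he.1, heγ⟩)
  · -- closed
    intro α hα hα0 hsup
    have hDne : (drop u E ∩ Set.Iio α).Nonempty := by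
      by_contra h
      rw [Set.not_nonempty_iff_eq_empty] at h
      rw [h, csSup_empty] at hsup
      exact hα0 hsup.symm
    have hsubE : drop u E ∩ Set.Iio α ⊆ E ∩ Set.Iio δ ∩ Set.Iio α := by
      rintro o ⟨⟨γ, hγu, hinf, rfl⟩, hoα⟩
      exact ⟨key δ hδ E hE (hu.1 hγu) hinf, hoα⟩
    have hbddEα : BddAbove (E ∩ Set.Iio δ ∩ Set.Iio α) :=
      bdd_of_subset_Iio (fun b hb => hb.2)
    have hEsup : sSup (E ∩ Set.Iio δ ∩ Set.Iio α) = α := by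
      refine le_antisymm (csSup_le' (fun b hb => le_of_lt hb.2)) ?_
      calc α = sSup (drop u E ∩ Set.Iio α) := hsup.symm
        _ ≤ sSup (E ∩ Set.Iio δ ∩ Set.Iio α) := csSup_le_csSup hbddEα hDne hsubE
    have hαE : α ∈ E ∩ Set.Iio δ := hE.2.2 α hα hα0 hEsup
    have hEIioα : E ∩ Set.Iio δ ∩ Set.Iio α = E ∩ Set.Iio α := by
      ext b; constructor
      · rintro ⟨⟨hb, -⟩, hbα⟩; exact ⟨hb, hbα⟩
      · rintro ⟨hb, hbα⟩; exact ⟨⟨hb, lt_trans hbα hα⟩, hbα⟩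
    -- every witness γ for an element of drop u E ∩ Iio α satisfies o ≤ γ < α
    have hwit : ∀ o ∈ drop u E ∩ Set.Iio α, ∃ γ ∈ u ∩ Set.Iio α, o ≤ γ := by
      rintro o ⟨⟨γ, hγu, hinf, rfl⟩, hoα⟩
      have hbddγ : BddAbove (E ∩ Set.Iio γ) := bdd_of_subset_Iio (fun b hb => hb.2)
      have hoγ : sSup (E ∩ Set.Iio γ) ≤ γ := csSup_le' (fun b hb => le_of_lt hb.2)
      have hγα : γ < α := by
        by_contra hge
        push_neg at hge
        have hsub : E ∩ Set.Iio α ⊆ E ∩ Set.Iio γ :=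
          fun b hb => ⟨hb.1, lt_of_lt_of_le hb.2 hge⟩
        have hne : (E ∩ Set.Iio α).Nonempty := by
          refine ⟨sInf E, hinfE, ?_⟩
          have hio : sInf E ≤ sSup (E ∩ Set.Iio γ) :=
            csInf_le' (key δ hδ E hE (hu.1 hγu) hinf).1
          exact lt_of_le_of_lt hio hoα
        have : α ≤ sSup (E ∩ Set.Iio γ) := by
          calc α = sSup (E ∩ Set.Iio δ ∩ Set.Iio α) := hEsup.symm
            _ = sSup (E ∩ Set.Iio α) := by rw [hEIioα]
            _ ≤ sSup (E ∩ Set.Iio γ) := csSup_le_csSup hbddγ hne hsub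
        exact absurd hoα (not_lt.mpr this)
      exact ⟨γ, ⟨hγu, hγα⟩, hoγ⟩
    have husup : sSup (u ∩ Set.Iio α) = α := by
      refine le_antisymm (csSup_le' (fun b hb => le_of_lt hb.2)) ?_
      have hbddu : BddAbove (u ∩ Set.Iio α) := bdd_of_subset_Iio (fun b hb => hb.2)
      calc α = sSup (drop u E ∩ Set.Iio α) := hsup.symm
        _ ≤ sSup (u ∩ Set.Iio α) := by
            refine csSup_le hDne (fun o ho => ?_)
            obtain ⟨γ, hγ, hoγ⟩ := hwit o ho
            exact le_trans hoγ (le_csSup hbddu hγ)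
    have hαu : α ∈ u := hu.2.2 α hα hα0 husup
    have hinfα : sInf E < α := by
      obtain ⟨o, ho⟩ := hDne
      have : sInf E ≤ o := csInf_le' ((hsubE ho).1.1)
      exact lt_of_le_of_lt this ho.2
    exact ⟨α, hαu, hinfα, by rw [← hEIioα, hEsup]⟩
end

section
/- If δ is a limit ordinal, u is club in δ and E ∩ δ is club in δ, then every accumulation point of drop(u,E) below δ is both an accumulation point of u and an accumulation point of E. -/
open Cardinal Set

/-- If `δ` is a limit ordinal, `u` is club in `δ` and `E ∩ δ` is club in `δ`, then
every accumulation point of `drop u E` below `δ` (an ordinal `α` with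
`sup (drop u E ∩ α) = α`) is both an accumulation point of `u` and of `E`. -/
theorem stmt_2 (δ : Ordinal) (hδ : Order.IsSuccLimit δ) (u E : Set Ordinal)
    (hu : IsClubIn u δ) (hE : IsClubIn (E ∩ Set.Iio δ) δ) :
    ∀ α < δ, sSup (drop u E ∩ Set.Iio α) = α →
      sSup (u ∩ Set.Iio α) = α ∧ sSup (E ∩ Set.Iio α) = α := by
  intro α hαδ hsup
  -- First: sSup (E ∩ Iio α) = α
  have hEsup : sSup (E ∩ Set.Iio α) = α := by
    apply le_antisymm
    · exact csSup_le' (fun e he => le_of_lt he.2)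
    · apply le_of_forall_lt
      intro γ hγ
      rw [← hsup] at hγ
      obtain ⟨o, ⟨⟨β, hβu, hinf, ho⟩, hoα⟩, hγo⟩ := exists_lt_of_lt_csSup' hγ
      rw [ho] at hγo
      obtain ⟨e, ⟨heE, heβ⟩, hγe⟩ := exists_lt_of_lt_csSup' hγo
      have heo : e ≤ sSup (E ∩ Set.Iio β) :=
        le_csSup ⟨β, fun x hx => le_of_lt hx.2⟩ ⟨heE, heβ⟩
      have heα : e < α := lt_of_le_of_lt (ho ▸ heo) hoα
      exact lt_of_lt_of_le hγe (le_csSup ⟨α, fun x hx => le_of_lt hx.2⟩ ⟨heE, heα⟩)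
  refine ⟨?_, hEsup⟩
  apply le_antisymm
  · exact csSup_le' (fun e he => le_of_lt he.2)
  · apply le_of_forall_lt
    intro γ hγ
    rw [← hsup] at hγ
    obtain ⟨o, ⟨⟨β, hβu, hinf, ho⟩, hoα⟩, hγo⟩ := exists_lt_of_lt_csSup' hγ
    have hoβ : o ≤ β := ho ▸ csSup_le' (fun x hx => le_of_lt hx.2)
    have hβα : β < α := by
      by_contra h
      push_neg at h
      have : sSup (E ∩ Set.Iio α) ≤ sSup (E ∩ Set.Iio β) := by
        exact csSup_le_csSup' ⟨β, fun x hx => le_of_lt hx.2⟩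
          (fun x hx => ⟨hx.1, lt_of_lt_of_le hx.2 h⟩)
      rw [hEsup, ← ho] at this
      exact absurd (lt_of_le_of_lt this hoα) (lt_irrefl α)
    refine lt_of_lt_of_le (lt_of_lt_of_le hγo hoβ)
      (le_csSup ⟨α, fun x hx => le_of_lt hx.2⟩ ⟨hβu, hβα⟩)
end

section
/- If f : 𝔄 → 𝔅 is an isomorphism between two structures with universe κ, then for every α < κ the function (f ↾ α) ∪ ((f⁻¹ ↾ α))⁻¹, i.e., the restriction of f to {x < κ : x < α or f(x) < α}, belongs to T_α. -/
open Cardinal Set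

/-! The tree `T = ⋃_{α<κ} T_α` of partial isomorphisms between two structures `𝔄`, `𝔅`
(in a countable relational language, interpretations `A`, `B`) with universe `κ`,
coded as graphs; see the previous statements. -/

def FunctionalInj (F : Set (Ordinal.{0} × Ordinal.{0})) : Prop :=
  (∀ p ∈ F, ∀ q ∈ F, Prod.fst p = Prod.fst q → Prod.snd p = Prod.snd q) ∧
  (∀ p ∈ F, ∀ q ∈ F, Prod.snd p = Prod.snd q → Prod.fst p = Prod.fst q)

def pdom (F : Set (Ordinal.{0} × Ordinal.{0})) : Set Ordinal.{0} := {x | ∃ y, (x, y) ∈ F}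

def pran (F : Set (Ordinal.{0} × Ordinal.{0})) : Set Ordinal.{0} := {y | ∃ x, (x, y) ∈ F}

def IsPIso (κ : Cardinal.{0}) {ι : Type} (ar : ι → ℕ)
    (A B : (i : ι) → (Fin (ar i) → Ordinal.{0}) → Prop)
    (F : Set (Ordinal.{0} × Ordinal.{0})) : Prop :=
  FunctionalInj F ∧ F ⊆ Set.Iio κ.ord ×ˢ Set.Iio κ.ord ∧
    ∀ (i : ι) (v w : Fin (ar i) → Ordinal.{0}), (∀ j, (v j, w j) ∈ F) → (A i v ↔ B i w)

def InT (κ : Cardinal.{0}) {ι : Type} (ar : ι → ℕ)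
    (A B : (i : ι) → (Fin (ar i) → Ordinal.{0}) → Prop)
    (α : Ordinal.{0}) (F : Set (Ordinal.{0} × Ordinal.{0})) : Prop :=
  IsPIso κ ar A B F ∧ #F < Cardinal.lift.{1} κ ∧
    Set.Iio α ⊆ pdom F ∧ Set.Iio α ⊆ pran F ∧
    ∀ p ∈ F, (α ≤ Prod.fst p → Prod.snd p < α) ∧ (α ≤ Prod.snd p → Prod.fst p < α)

def IsIso (κ : Cardinal.{0}) {ι : Type} (ar : ι → ℕ)
    (A B : (i : ι) → (Fin (ar i) → Ordinal.{0}) → Prop)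
    (F : Set (Ordinal.{0} × Ordinal.{0})) : Prop :=
  IsPIso κ ar A B F ∧ pdom F = Set.Iio κ.ord ∧ pran F = Set.Iio κ.ord

/-- If `F` is an isomorphism from `𝔄` onto `𝔅`, then for every `α < κ` the function
`(F ↾ α) ∪ (F⁻¹ ↾ α)⁻¹`, i.e. the restriction of `F` to
`{x < κ : x < α or F x < α}`, belongs to `T_α`. -/
theorem stmt_6 (κ : Cardinal.{0}) (hreg : κ.IsRegular) (hunc : ℵ₀ < κ)
    {ι : Type} [Countable ι] (ar : ι → ℕ)
    (A B : (i : ι) → (Fin (ar i) → Ordinal.{0}) → Prop)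
    (F : Set (Ordinal.{0} × Ordinal.{0})) (hF : IsIso κ ar A B F)
    (α : Ordinal.{0}) (hα : α < κ.ord) :
    InT κ ar A B α {p ∈ F | Prod.fst p < α ∨ Prod.snd p < α} := by
  classical
  obtain ⟨⟨hfi, hsub, hrel⟩, hdom, hran⟩ := hF
  set G : Set (Ordinal.{0} × Ordinal.{0}) := {p ∈ F | Prod.fst p < α ∨ Prod.snd p < α} with hGdef
  have hGF : G ⊆ F := fun p hp => hp.1
  refine ⟨⟨⟨fun p hp q hq => hfi.1 p (hGF hp) q (hGF hq),
           fun p hp q hq => hfi.2 p (hGF hp) q (hGF hq)⟩,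
          fun p hp => hsub (hGF hp),
          fun i v w h => hrel i v w fun j => hGF (h j)⟩, ?_, ?_, ?_, ?_⟩
  · -- cardinality
    have key : #G ≤ #(↥(Set.Iio α) ⊕ ↥(Set.Iio α)) := by
      refine mk_le_of_injective (f := fun p : G =>
        if h : p.1.1 < α then Sum.inl ⟨p.1.1, h⟩
        else Sum.inr ⟨p.1.2, p.2.2.resolve_left h⟩) ?_
      intro p q hpq
      by_cases h1 : p.1.1 < α <;> by_cases h2 : q.1.1 < α <;>
        simp only [h1, h2, dif_pos, dif_neg, not_false_iff] at hpq
      · have h11 : p.1.1 = q.1.1 := congrArg Subtype.val (Sum.inl.inj hpq)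
        have := hfi.1 p.1 (hGF p.2) q.1 (hGF q.2) h11
        exact Subtype.ext (Prod.ext h11 this)
      · exact absurd hpq (by simp)
      · exact absurd hpq (by simp)
      · have h22 : p.1.2 = q.1.2 := congrArg Subtype.val (Sum.inr.inj hpq)
        have := hfi.2 p.1 (hGF p.2) q.1 (hGF q.2) h22
        exact Subtype.ext (Prod.ext this h22)
    have hIio : #(↥(Set.Iio α)) = Cardinal.lift.{1} α.card := Ordinal.mk_Iio_ordinal α
    have hcard : α.card < κ := Cardinal.lt_ord.mp hα
    calc #G ≤ #(↥(Set.Iio α) ⊕ ↥(Set.Iio α)) := key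
      _ = Cardinal.lift.{1} α.card + Cardinal.lift.{1} α.card := by
          rw [Cardinal.mk_sum, hIio]; simp
      _ = Cardinal.lift.{1} (α.card + α.card) := by rw [Cardinal.lift_add]
      _ < Cardinal.lift.{1} κ := by
          rw [Cardinal.lift_lt]
          exact Cardinal.add_lt_of_lt hunc.le hcard hcard
  · intro x hx
    have hx' : x ∈ pdom F := hdom ▸ (hx.trans hα)
    obtain ⟨y, hy⟩ := hx'
    exact ⟨y, hy, Or.inl hx⟩
  · intro y hy
    have hy' : y ∈ pran F := hran ▸ (hy.trans hα)
    obtain ⟨x, hx⟩ := hy'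
    exact ⟨x, hx, Or.inr hy⟩
  · intro p hp
    exact ⟨fun h => hp.2.resolve_left (not_lt.mpr h),
           fun h => hp.2.resolve_right (not_lt.mpr h)⟩
end

section
/- Every splitting μ-fan-closed (∞, μ⁺)-tree is a normal tree of height μ⁺ (assuming μ^{<μ} = μ): for every node x and every ordinal α < μ⁺ there exists y >_T x of height at least α. -/
open Cardinal Set

universe u

/-- The height of a node of a tree: the order type of its set of strict predecessors. -/
noncomputable def ht {T : Type u} [PartialOrder T]
    (hwo : ∀ x : T, IsWellOrder (Set.Iio x) (Subrel ((· < ·) : T → T → Prop) (Set.Iio x)))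
    (x : T) : Ordinal.{u} :=
  @Ordinal.type _ _ (hwo x)

section Aux

variable {T : Type u} [PartialOrder T]
variable (hwo : ∀ x : T, IsWellOrder (Set.Iio x) (Subrel ((· < ·) : T → T → Prop) (Set.Iio x)))

include hwo in
/-- Any two elements below a common upper bound are comparable. -/
theorem lin_below {y a b : T} (ha : a ≤ y) (hb : b ≤ y) : a ≤ b ∨ b ≤ a := by
  rcases eq_or_lt_of_le ha with rfl | ha'
  · exact Or.inr hb
  rcases eq_or_lt_of_le hb with rfl | hb'
  · exact Or.inl ha'.le
  haveI : IsWellOrder (Subtype (Set.Iio y)) (Subrel ((· < ·) : T → T → Prop) (Set.Iio y)) := hwo y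
  rcases trichotomous_of (Subrel ((· < ·) : T → T → Prop) (Set.Iio y))
      ⟨a, ha'⟩ ⟨b, hb'⟩ with h | h | h
  · exact Or.inl (le_of_lt ((subrel_val _ _).mp h))
  · exact Or.inl (le_of_eq (congrArg Subtype.val h))
  · exact Or.inr (le_of_lt ((subrel_val _ _).mp h))

/-- The height of `a` is the `typein` of `a` inside the predecessors of any `b > a`. -/
theorem ht_eq_typein {a b : T} (h : a < b) :
    ht hwo a =
      @Ordinal.typein _ (Subrel ((· < ·) : T → T → Prop) (Set.Iio b)) (hwo b) ⟨a, h⟩ := by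
  haveI : IsWellOrder (Subtype (Set.Iio b)) (Subrel ((· < ·) : T → T → Prop) (Set.Iio b)) := hwo b
  haveI := hwo a
  rw [← Ordinal.type_subrel]
  refine Ordinal.type_eq.2 ⟨?_⟩
  refine ⟨⟨fun u => ⟨⟨u.1, lt_trans u.2 h⟩, u.2⟩, fun v => ⟨v.1.1, v.2⟩,
    fun u => Subtype.ext rfl, fun v => Subtype.ext (Subtype.ext rfl)⟩, Iff.rfl⟩

theorem ht_lt_of_lt {a b : T} (h : a < b) : ht hwo a < ht hwo b := by
  haveI : IsWellOrder (Subtype (Set.Iio b)) (Subrel ((· < ·) : T → T → Prop) (Set.Iio b)) := hwo b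
  rw [ht_eq_typein hwo h]
  exact Ordinal.typein_lt_type _ _

theorem ht_le_of_le {a b : T} (h : a ≤ b) : ht hwo a ≤ ht hwo b := by
  rcases eq_or_lt_of_le h with rfl | h'
  · exact le_rfl
  · exact (ht_lt_of_lt hwo h').le

theorem le_of_ht_le {a b y : T} (ha : a ≤ y) (hb : b ≤ y)
    (h : ht hwo a ≤ ht hwo b) : a ≤ b := by
  rcases lin_below hwo ha hb with h' | h'
  · exact h'
  · rcases eq_or_lt_of_le h' with rfl | h''
    · exact le_rfl
    · exact absurd (ht_lt_of_lt hwo h'') (not_lt.2 h)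

/-- Cutting a node down to a prescribed smaller height. -/
theorem exists_cut {y : T} {β : Ordinal.{u}} (h : β ≤ ht hwo y) :
    ∃ w, w ≤ y ∧ ht hwo w = β ∧ ∀ a, a ≤ y → ht hwo a ≤ β → a ≤ w := by
  have main : ∃ w, w ≤ y ∧ ht hwo w = β := by
    rcases eq_or_lt_of_le h with h' | h'
    · exact ⟨y, le_rfl, h'.symm⟩
    · haveI : IsWellOrder (Subtype (Set.Iio y)) (Subrel ((· < ·) : T → T → Prop) (Set.Iio y)) := hwo y
      have h'' : β < Ordinal.type (Subrel ((· < ·) : T → T → Prop) (Set.Iio y)) := h'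
      refine ⟨(Ordinal.enum _ ⟨β, h''⟩).1,
        le_of_lt (Ordinal.enum _ ⟨β, h''⟩).2, ?_⟩
      rw [ht_eq_typein hwo (Ordinal.enum _ ⟨β, h''⟩).2]
      exact Ordinal.typein_enum _ h''
  obtain ⟨w, hw, hwht⟩ := main
  refine ⟨w, hw, hwht, fun a hay haht => ?_⟩
  exact le_of_ht_le hwo hay hw (by rw [hwht]; exact haht)

/-- A cover increases the height by at most one. -/
theorem cover_ht {a b : T} (h : a ⋖ b) : ht hwo b ≤ ht hwo a + 1 := by
  by_contra hc
  push_neg at hc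
  obtain ⟨w, hwb, hwht, -⟩ := exists_cut hwo hc.le
  have hwb' : w < b := by
    rcases eq_or_lt_of_le hwb with rfl | h'
    · exact absurd hwht (ne_of_gt hc)
    · exact h'
  have haw : a < w := by
    have h1 : ht hwo a < ht hwo w := by
      rw [hwht, Ordinal.add_one_eq_succ]
      exact Order.lt_succ _
    have h2 : a ≤ w := le_of_ht_le hwo h.1.le hwb h1.le
    exact lt_of_le_of_ne h2 (fun he => absurd (congrArg (ht hwo) he) (ne_of_lt h1))
  exact h.2 haw hwb'

include hwo in
/-- If `y₀, y₁` are distinct covers of `x` and `z₀ ≥ y₀`, `z₁ ≥ y₁`, then `x` is the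
greatest lower bound of `{z₀, z₁}`. -/
theorem glb_aux {x y0 y1 z0 z1 : T} (h0 : x ⋖ y0) (h1 : x ⋖ y1) (hne : y0 ≠ y1)
    (e0 : y0 ≤ z0) (e1 : y1 ≤ z1) : IsGLB {z0, z1} x := by
  have hx0 : x ≤ z0 := h0.1.le.trans e0
  have hx1 : x ≤ z1 := h1.1.le.trans e1
  constructor
  · rintro t (rfl | rfl)
    · exact hx0
    · exact hx1
  · intro w hw
    have hw0 : w ≤ z0 := hw (mem_insert _ _)
    have hw1 : w ≤ z1 := hw (mem_insert_of_mem _ rfl)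
    by_contra hwx
    have hxw : x < w := by
      rcases lin_below hwo hw0 hx0 with h | h
      · exact absurd h hwx
      · exact lt_of_le_of_ne h (fun he => hwx (le_of_eq he.symm))
    have hy0w : y0 ≤ w := by
      rcases lin_below hwo hw0 e0 with h | h
      · rcases eq_or_lt_of_le h with rfl | h'
        · exact le_rfl
        · exact absurd h' (h0.2 hxw)
      · exact h
    have hy1w : y1 ≤ w := by
      rcases lin_below hwo hw1 e1 with h | h
      · rcases eq_or_lt_of_le h with rfl | h'
        · exact le_rfl
        · exact absurd h' (h1.2 hxw)
      · exact h
    rcases lin_below hwo hy0w hy1w with h | h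
    · rcases eq_or_lt_of_le h with he | h'
      · exact hne he
      · exact h1.2 h0.1 h'
    · rcases eq_or_lt_of_le h with he | h'
      · exact hne he.symm
      · exact h0.2 h1.1 h'

/-- The image of an initial segment of the ordinals in a `Type u` is small. -/
theorem card_image_Iio_lt (g : Ordinal.{u} → T) {ξ : Ordinal.{u}} {μ : Cardinal.{u}}
    (h : ξ < μ.ord) : #(g '' Set.Iio ξ) < μ := by
  have h1 : Cardinal.lift.{u + 1} #(g '' Set.Iio ξ) ≤ Cardinal.lift.{u} #(Set.Iio ξ) :=
    Cardinal.mk_image_le_lift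
  rw [Ordinal.mk_Iio_ordinal, Cardinal.lift_lift] at h1
  exact (Cardinal.lift_le.mp h1).trans_lt (Cardinal.lt_ord.mp h)

end Aux

open Classical in
/-- Pick an element satisfying `P` if one exists, else a default. -/
noncomputable def pick {T : Type u} (P : T → Prop) (d : T) : T :=
  if h : ∃ w, P w then h.choose else d

theorem pick_spec {T : Type u} {P : T → Prop} {d : T} (h : ∃ w, P w) : P (pick P d) := by
  classical
  unfold pick
  rw [dif_pos h]
  exact h.choose_spec

/-- A choice of one of two distinct covers of a node. -/
noncomputable def covbNode {T : Type u} [PartialOrder T]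
    (hs : ∀ x : T, ∃ y z : T, x ⋖ y ∧ x ⋖ z ∧ y ≠ z) (t : T) (b : Bool) : T :=
  if b then (hs t).choose_spec.choose else (hs t).choose

theorem covbNode_cov {T : Type u} [PartialOrder T]
    (hs : ∀ x : T, ∃ y z : T, x ⋖ y ∧ x ⋖ z ∧ y ≠ z) (t : T) (b : Bool) :
    t ⋖ covbNode hs t b := by
  obtain ⟨h1, h2, h3⟩ := (hs t).choose_spec.choose_spec
  cases b
  · simpa [covbNode] using h1
  · simpa [covbNode] using h2

theorem covbNode_ne {T : Type u} [PartialOrder T]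
    (hs : ∀ x : T, ∃ y z : T, x ⋖ y ∧ x ⋖ z ∧ y ≠ z) (t : T) :
    covbNode hs t false ≠ covbNode hs t true := by
  simpa [covbNode] using (hs t).choose_spec.choose_spec.2.2

/-- The strictly increasing continuous sequence of heights. -/
noncomputable def deltaSeq (d0 : Ordinal.{u}) (s : Ordinal.{u} → Ordinal.{u})
    (ξ : Ordinal.{u}) : Ordinal.{u} :=
  Ordinal.limitRecOn ξ d0 (fun ν dν => max (s ν) (dν + 1))
    (fun ν _ IH => sSup {a | ∃ (ρ : Ordinal.{u}) (h : ρ < ν), IH ρ h = a})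

theorem deltaSeq_zero (d0 : Ordinal.{u}) (s : Ordinal.{u} → Ordinal.{u}) :
    deltaSeq d0 s 0 = d0 := by
  unfold deltaSeq
  rw [Ordinal.limitRecOn_zero]

theorem deltaSeq_succ (d0 : Ordinal.{u}) (s : Ordinal.{u} → Ordinal.{u}) (ν : Ordinal.{u}) :
    deltaSeq d0 s (ν + 1) = max (s ν) (deltaSeq d0 s ν + 1) := by
  unfold deltaSeq
  rw [Ordinal.add_one_eq_succ, Ordinal.limitRecOn_succ]

theorem deltaSeq_limit (d0 : Ordinal.{u}) (s : Ordinal.{u} → Ordinal.{u}) {ν : Ordinal.{u}}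
    (h : Order.IsSuccLimit ν) : deltaSeq d0 s ν = sSup (deltaSeq d0 s '' Set.Iio ν) := by
  unfold deltaSeq
  rw [Ordinal.limitRecOn_limit _ _ _ _ h]
  congr 1
  ext a
  constructor
  · rintro ⟨ρ, hρ, rfl⟩
    exact ⟨ρ, hρ, rfl⟩
  · rintro ⟨ρ, hρ, rfl⟩
    exact ⟨ρ, hρ, rfl⟩

theorem deltaSeq_limit' (d0 : Ordinal.{u}) (s : Ordinal.{u} → Ordinal.{u}) {ν : Ordinal.{u}}
    (h : Order.IsSuccLimit ν) :
    deltaSeq d0 s ν = Ordinal.bsup.{u, u} ν (fun ρ _ => deltaSeq d0 s ρ) := by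
  rw [deltaSeq_limit d0 s h, ← Ordinal.sSup_eq_bsup]
  congr 1
  ext a
  constructor
  · rintro ⟨ρ, hρ, rfl⟩
    exact ⟨ρ, hρ, rfl⟩
  · rintro ⟨ρ, hρ, rfl⟩
    exact ⟨ρ, hρ, rfl⟩

section Fan

variable {T : Type u} [PartialOrder T]
variable (hwo : ∀ x : T, IsWellOrder (Set.Iio x) (Subrel ((· < ·) : T → T → Prop) (Set.Iio x)))
variable (hs : ∀ x : T, ∃ y z : T, x ⋖ y ∧ x ⋖ z ∧ y ≠ z)
variable (x₀ : T) (δ : Ordinal.{u} → Ordinal.{u})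

/-- The fan of nodes above `x₀` with heights given by `δ`. -/
noncomputable def fanF (ξ : Ordinal.{u}) : (Ordinal.{u} → Bool) → T :=
  Ordinal.limitRecOn ξ (fun _ => x₀)
    (fun ν Fν f => pick (fun w => covbNode hs (Fν f) (f ν) ≤ w ∧ ht hwo w = δ (ν + 1)) x₀)
    (fun ν _ IH f => pick (fun w => (∀ ρ (h : ρ < ν), IH ρ h f ≤ w) ∧ ht hwo w = δ ν) x₀)

theorem fanF_zero (f : Ordinal.{u} → Bool) : fanF hwo hs x₀ δ 0 f = x₀ := by
  unfold fanF
  rw [Ordinal.limitRecOn_zero]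

theorem fanF_succ (ν : Ordinal.{u}) (f : Ordinal.{u} → Bool) :
    fanF hwo hs x₀ δ (ν + 1) f =
      pick (fun w => covbNode hs (fanF hwo hs x₀ δ ν f) (f ν) ≤ w ∧
        ht hwo w = δ (ν + 1)) x₀ := by
  unfold fanF
  rw [Ordinal.add_one_eq_succ, Ordinal.limitRecOn_succ]
  rfl

theorem fanF_limit {ν : Ordinal.{u}} (h : Order.IsSuccLimit ν) (f : Ordinal.{u} → Bool) :
    fanF hwo hs x₀ δ ν f =
      pick (fun w => (∀ ρ (_ : ρ < ν), fanF hwo hs x₀ δ ρ f ≤ w) ∧ ht hwo w = δ ν) x₀ := by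
  unfold fanF
  rw [Ordinal.limitRecOn_limit _ _ _ _ h]

/-- The fan node at `ξ` depends only on the restriction of `f` below `ξ`. -/
theorem fanF_coh : ∀ ξ : Ordinal.{u}, ∀ f g : Ordinal.{u} → Bool,
    (∀ ν < ξ, f ν = g ν) → fanF hwo hs x₀ δ ξ f = fanF hwo hs x₀ δ ξ g := by
  intro ξ
  induction ξ using Ordinal.induction with
  | _ ξ IH =>
  rcases Ordinal.zero_or_succ_or_isSuccLimit ξ with rfl | ⟨ν, rfl⟩ | hlim
  · intro f g _
    rw [fanF_zero, fanF_zero]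
  · intro f g hfg
    rw [← Ordinal.add_one_eq_succ] at hfg ⊢
    have hν : ν < ν + 1 := by
      rw [Ordinal.add_one_eq_succ]; exact Order.lt_succ ν
    have h1 : fanF hwo hs x₀ δ ν f = fanF hwo hs x₀ δ ν g :=
      IH ν hν f g (fun ρ hρ => hfg ρ (hρ.trans hν))
    have h2 : f ν = g ν := hfg ν hν
    rw [fanF_succ, fanF_succ, h1, h2]
  · intro f g hfg
    rw [fanF_limit hwo hs x₀ δ hlim, fanF_limit hwo hs x₀ δ hlim]
    have key : (fun w => (∀ ρ (_ : ρ < ξ), fanF hwo hs x₀ δ ρ f ≤ w) ∧ ht hwo w = δ ξ)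
        = (fun w => (∀ ρ (_ : ρ < ξ), fanF hwo hs x₀ δ ρ g ≤ w) ∧ ht hwo w = δ ξ) := by
      funext w
      apply propext
      constructor
      · rintro ⟨h1, h2⟩
        refine ⟨fun ρ h => ?_, h2⟩
        rw [← IH ρ h f g (fun ν hν => hfg ν (hν.trans h))]
        exact h1 ρ h
      · rintro ⟨h1, h2⟩
        refine ⟨fun ρ h => ?_, h2⟩
        rw [IH ρ h f g (fun ν hν => hfg ν (hν.trans h))]
        exact h1 ρ h
    rw [key]

variable {μ : Cardinal.{u}}
variable (hclosed : ∀ c : Set T, IsChain (· ≤ ·) c → #c < μ → ∃ ub : T, ∀ x ∈ c, x ≤ ub)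
variable {α c : Ordinal.{u}}

include hclosed in
/-- The main invariant of the fan construction. -/
theorem fanF_inv (hcμ : c ≤ μ.ord)
    (hδ0 : δ 0 = ht hwo x₀)
    (hδsucc : ∀ ν, δ ν + 1 ≤ δ (ν + 1))
    (hδmono : ∀ ξ ν, ν < ξ → δ ν < δ ξ)
    (hδlim : ∀ ξ : Ordinal.{u}, Order.IsSuccLimit ξ →
      δ ξ = Ordinal.bsup.{u, u} ξ (fun ρ _ => δ ρ))
    (hdlt : ∀ ξ < c, δ ξ < α)
    (IH : ∀ β < α, ∀ x' : T, ∃ y, x' ≤ y ∧ β ≤ ht hwo y) :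
    ∀ ξ, ξ < c → ∀ f : Ordinal.{u} → Bool,
      ht hwo (fanF hwo hs x₀ δ ξ f) = δ ξ ∧
      (∀ ν ≤ ξ, fanF hwo hs x₀ δ ν f ≤ fanF hwo hs x₀ δ ξ f) ∧
      (∀ ν, ξ = ν + 1 →
        covbNode hs (fanF hwo hs x₀ δ ν f) (f ν) ≤ fanF hwo hs x₀ δ ξ f) := by
  intro ξ
  induction ξ using Ordinal.induction with
  | _ ξ IH' =>
  intro hξc f
  rcases Ordinal.zero_or_succ_or_isSuccLimit ξ with rfl | ⟨ν, rfl⟩ | hlim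
  · refine ⟨by rw [fanF_zero, hδ0], fun ν hν => ?_, fun ν hν => ?_⟩
    · have : ν = 0 := le_antisymm hν (zero_le (a := ν))
      rw [this]
    · exact absurd hν.symm (Ordinal.succ_ne_zero ν ∘ (Ordinal.add_one_eq_succ ν ▸ ·))
  · rw [← Ordinal.add_one_eq_succ] at hξc ⊢
    have hνν1 : ν < ν + 1 := by
      rw [Ordinal.add_one_eq_succ]; exact Order.lt_succ ν
    have hνc : ν < c := hνν1.trans hξc
    obtain ⟨htν, monoν, -⟩ := IH' ν hνν1 hνc f
    set y := covbNode hs (fanF hwo hs x₀ δ ν f) (f ν) with hy_def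
    have hy : fanF hwo hs x₀ δ ν f ⋖ y := covbNode_cov hs _ _
    have hty : ht hwo y ≤ δ (ν + 1) := by
      have h1 := cover_ht hwo hy
      rw [htν] at h1
      exact h1.trans (hδsucc ν)
    have hδν1 : δ (ν + 1) < α := hdlt _ hξc
    obtain ⟨e, hye, hhte⟩ := IH _ hδν1 y
    obtain ⟨w, hwe, hwht, hwcl⟩ := exists_cut hwo hhte
    have hex : ∃ w, y ≤ w ∧ ht hwo w = δ (ν + 1) := ⟨w, hwcl y hye hty, hwht⟩
    have hspec := pick_spec (d := x₀) hex
    rw [← fanF_succ hwo hs x₀ δ ν f] at hspec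
    refine ⟨hspec.2, fun ρ hρ => ?_, fun ρ hρ => ?_⟩
    · rcases eq_or_lt_of_le hρ with rfl | hρ'
      · exact le_rfl
      · have hρν : ρ ≤ ν := by
          rw [Ordinal.add_one_eq_succ] at hρ'
          exact Order.lt_succ_iff.mp hρ'
        exact ((monoν ρ hρν).trans hy.1.le).trans hspec.1
    · have : ν = ρ := by
        rwa [Ordinal.add_one_eq_succ, Ordinal.add_one_eq_succ, Order.succ_eq_succ_iff] at hρ
      rw [← this]
      exact hspec.1
  · have hub0 : ∀ ν < ξ, ∀ ρ ≤ ν, fanF hwo hs x₀ δ ρ f ≤ fanF hwo hs x₀ δ ν f :=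
      fun ν hν => (IH' ν hν (hν.trans hξc) f).2.1
    have hht0 : ∀ ν < ξ, ht hwo (fanF hwo hs x₀ δ ν f) = δ ν :=
      fun ν hν => (IH' ν hν (hν.trans hξc) f).1
    set C := (fun ν => fanF hwo hs x₀ δ ν f) '' Set.Iio ξ with hC_def
    have hchain : IsChain (· ≤ ·) C := by
      rintro _ ⟨ν₁, h₁, rfl⟩ _ ⟨ν₂, h₂, rfl⟩ _
      rcases le_total ν₁ ν₂ with h | h
      · exact Or.inl (hub0 ν₂ h₂ ν₁ h)
      · exact Or.inr (hub0 ν₁ h₁ ν₂ h)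
    have hcard : #C < μ := card_image_Iio_lt _ (lt_of_lt_of_le hξc hcμ)
    obtain ⟨u, hu⟩ := hclosed C hchain hcard
    have hub : ∀ ν < ξ, fanF hwo hs x₀ δ ν f ≤ u := fun ν h => hu _ ⟨ν, h, rfl⟩
    have hht : δ ξ ≤ ht hwo u := by
      rw [hδlim ξ hlim]
      exact Ordinal.bsup_le fun ν h => by
        rw [← hht0 ν h]; exact ht_le_of_le hwo (hub ν h)
    obtain ⟨w, hwu, hwht, hwcl⟩ := exists_cut hwo hht
    have hex : ∃ w, (∀ ρ (_ : ρ < ξ), fanF hwo hs x₀ δ ρ f ≤ w) ∧ ht hwo w = δ ξ := by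
      refine ⟨w, fun ρ h => hwcl _ (hub ρ h) ?_, hwht⟩
      rw [hht0 ρ h]
      exact (hδmono ξ ρ h).le
    have hspec := pick_spec (d := x₀) hex
    rw [← fanF_limit hwo hs x₀ δ hlim f] at hspec
    refine ⟨hspec.2, fun ρ hρ => ?_, fun ρ hρ => ?_⟩
    · rcases eq_or_lt_of_le hρ with rfl | hρ'
      · exact le_rfl
      · exact hspec.1 ρ hρ'
    · exfalso
      have hρξ : ρ < ξ := by
        rw [hρ, Ordinal.add_one_eq_succ]
        exact Order.lt_succ ρ
      have h1 := hlim.succ_lt hρξ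
      rw [hρ, Ordinal.add_one_eq_succ] at h1
      exact lt_irrefl _ h1

include hclosed in
/-- The greatest lower bound property of the fan. -/
theorem fanF_glb (hcμ : c ≤ μ.ord)
    (hδ0 : δ 0 = ht hwo x₀)
    (hδsucc : ∀ ν, δ ν + 1 ≤ δ (ν + 1))
    (hδmono : ∀ ξ ν, ν < ξ → δ ν < δ ξ)
    (hδlim : ∀ ξ : Ordinal.{u}, Order.IsSuccLimit ξ →
      δ ξ = Ordinal.bsup.{u, u} ξ (fun ρ _ => δ ρ))
    (hdlt : ∀ ξ < c, δ ξ < α)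
    (IH : ∀ β < α, ∀ x' : T, ∃ y, x' ≤ y ∧ β ≤ ht hwo y) :
    ∀ ξ, ξ + 1 < c → ∀ f : Ordinal.{u} → Bool,
      IsGLB {fanF hwo hs x₀ δ (ξ + 1) (Function.update f ξ false),
             fanF hwo hs x₀ δ (ξ + 1) (Function.update f ξ true)}
        (fanF hwo hs x₀ δ ξ f) := by
  intro ξ hξc f
  have coh : ∀ b : Bool, fanF hwo hs x₀ δ ξ (Function.update f ξ b) = fanF hwo hs x₀ δ ξ f :=
    fun b => fanF_coh hwo hs x₀ δ ξ _ f
      (fun ν hν => Function.update_of_ne (ne_of_lt hν) _ _)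
  have hinv := fanF_inv hwo hs x₀ δ hclosed hcμ hδ0 hδsucc hδmono hδlim hdlt IH
  have e : ∀ b : Bool, covbNode hs (fanF hwo hs x₀ δ ξ f) b ≤
      fanF hwo hs x₀ δ (ξ + 1) (Function.update f ξ b) := by
    intro b
    have h1 := (hinv (ξ + 1) hξc (Function.update f ξ b)).2.2 ξ rfl
    rwa [coh b, Function.update_self] at h1
  exact glb_aux hwo (covbNode_cov hs _ false) (covbNode_cov hs _ true)
    (covbNode_ne hs _) (e false) (e true)

end Fan

section Key

/-- The key step: extensions of arbitrarily large limit height exist. -/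
theorem key_step {T : Type u} [PartialOrder T] (μ : Cardinal.{u})
    (hμ : ℵ₀ ≤ μ)
    (hwo : ∀ x : T, IsWellOrder (Set.Iio x) (Subrel ((· < ·) : T → T → Prop) (Set.Iio x)))
    (hsplit₁ : ∀ x : T, ∃ y z : T, x ⋖ y ∧ x ⋖ z ∧ y ≠ z)
    (hclosed : ∀ c : Set T, IsChain (· ≤ ·) c → #c < μ → ∃ ub : T, ∀ x ∈ c, x ≤ ub)
    (hfan : ∀ (δ : Ordinal.{u} → Ordinal.{u}) (x : Ordinal.{u} → (Ordinal.{u} → Bool) → T),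
      StrictMonoOn δ (Set.Iio μ.ord) →
      (∀ ξ < μ.ord, Order.IsSuccLimit ξ → δ ξ = sSup (δ '' Set.Iio ξ)) →
      (∀ ξ < μ.ord, ∀ f g : Ordinal.{u} → Bool, (∀ ν < ξ, f ν = g ν) → x ξ f = x ξ g) →
      (∀ ξ, ξ < μ.ord → ∀ ν ≤ ξ, ∀ f : Ordinal.{u} → Bool, x ν f ≤ x ξ f) →
      (∀ ξ < μ.ord, ∀ f : Ordinal.{u} → Bool, ht hwo (x ξ f) = δ ξ) →
      (∀ ξ, ξ + 1 < μ.ord → ∀ f : Ordinal.{u} → Bool,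
        IsGLB {x (ξ + 1) (Function.update f ξ false), x (ξ + 1) (Function.update f ξ true)}
          (x ξ f)) →
      ∃ (g : Ordinal.{u} → Bool) (z : T), ∀ ξ < μ.ord, x ξ g ≤ z)
    (x₀ : T) (α : Ordinal.{u}) (hα : α < (Order.succ μ).ord) (hlimα : Order.IsSuccLimit α)
    (hd0 : ht hwo x₀ < α)
    (IH : ∀ β < α, ∀ x' : T, ∃ y, x' ≤ y ∧ β ≤ ht hwo y) :
    ∃ y, x₀ ≤ y ∧ α ≤ ht hwo y := by
  classical
  set c : Ordinal.{u} := (Ordinal.cof α).ord with hc_def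
  -- c ≤ μ.ord
  have hcardα : α.card ≤ μ := by
    have := Cardinal.lt_ord.mp hα
    exact Order.lt_succ_iff.mp this
  have hcμ : c ≤ μ.ord := Cardinal.ord_le_ord.mpr ((Ordinal.cof_le_card α).trans hcardα)
  have hclimit : Order.IsSuccLimit c := Cardinal.isSuccLimit_ord (Ordinal.aleph0_le_cof.2 hlimα)
  -- cofinal sequence
  obtain ⟨ι, sf, hlsub, hmk⟩ := Ordinal.exists_lsub_cof α
  have hmk' : #(ULift.{u + 1} ι) = #(Set.Iio c) := by
    rw [Cardinal.mk_uLift, hmk, Ordinal.mk_Iio_ordinal, hc_def, Cardinal.card_ord]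
  obtain ⟨e⟩ := Cardinal.eq.mp hmk'
  set s : Ordinal.{u} → Ordinal.{u} :=
    fun ξ => if h : ξ < c then sf (e.symm ⟨ξ, h⟩).down else 0 with hs_def
  have hs1 : ∀ ξ < c, s ξ < α := by
    intro ξ hξ
    rw [hs_def]
    dsimp only
    rw [dif_pos hξ, ← hlsub]
    exact Ordinal.lt_lsub _ _
  have hs2 : ∀ β < α, ∃ ξ, ξ < c ∧ β ≤ s ξ := by
    intro β hβ
    rw [← hlsub] at hβ
    obtain ⟨i, hi⟩ := Ordinal.lt_lsub_iff.mp hβ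
    refine ⟨(e ⟨i⟩).1, (e ⟨i⟩).2, ?_⟩
    rw [hs_def]
    dsimp only
    split
    · next h =>
      rw [show (⟨(e ⟨i⟩).1, h⟩ : Set.Iio c) = e ⟨i⟩ from Subtype.coe_eta _ _,
        Equiv.symm_apply_apply]
      exact hi
    · next h => exact absurd (e ⟨i⟩).2 h
  -- the height sequence
  set δ : Ordinal.{u} → Ordinal.{u} := deltaSeq (ht hwo x₀) s with hδ_def
  have hδ0 : δ 0 = ht hwo x₀ := deltaSeq_zero _ _
  have hδsucc : ∀ ν, δ ν + 1 ≤ δ (ν + 1) := by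
    intro ν
    rw [hδ_def, deltaSeq_succ]
    exact le_max_right _ _
  have hself : ∀ ν : Ordinal.{u}, δ ν < δ (ν + 1) := by
    intro ν
    have h1 : δ ν < δ ν + 1 := by
      rw [Ordinal.add_one_eq_succ]; exact Order.lt_succ _
    exact h1.trans_le (hδsucc ν)
  have hδlim : ∀ ξ : Ordinal.{u}, Order.IsSuccLimit ξ →
      δ ξ = Ordinal.bsup.{u, u} ξ (fun ρ _ => δ ρ) := fun ξ h => deltaSeq_limit' _ _ h
  have hδmono : ∀ ξ ν, ν < ξ → δ ν < δ ξ := by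
    intro ξ
    induction ξ using Ordinal.induction with
    | _ ξ IHd =>
    intro ν hν
    rcases Ordinal.zero_or_succ_or_isSuccLimit ξ with rfl | ⟨ρ, rfl⟩ | hl
    · exact absurd hν (not_lt_zero (a := ν))
    · rw [← Ordinal.add_one_eq_succ] at hν ⊢
      have hρρ1 : ρ < ρ + 1 := by
        rw [Ordinal.add_one_eq_succ]; exact Order.lt_succ ρ
      rcases eq_or_lt_of_le (show ν ≤ ρ by
          rw [Ordinal.add_one_eq_succ] at hν; exact Order.lt_succ_iff.mp hν) with rfl | h'
      · exact hself ν
      · exact (IHd ρ hρρ1 ν h').trans (hself ρ)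
    · have hν1 : ν + 1 < ξ := by
        have := hl.succ_lt hν
        rwa [← Ordinal.add_one_eq_succ] at this
      rw [hδlim ξ hl]
      exact (hself ν).trans_le (Ordinal.le_bsup _ (ν + 1) hν1)
  have hdlt : ∀ ξ < c, δ ξ < α := by
    intro ξ
    induction ξ using Ordinal.induction with
    | _ ξ IHd =>
    intro hξ
    rcases Ordinal.zero_or_succ_or_isSuccLimit ξ with rfl | ⟨ν, rfl⟩ | hl
    · rw [hδ0]; exact hd0
    · rw [← Ordinal.add_one_eq_succ] at hξ ⊢
      have hνν1 : ν < ν + 1 := by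
        rw [Ordinal.add_one_eq_succ]; exact Order.lt_succ ν
      rw [hδ_def, deltaSeq_succ]
      apply max_lt
      · exact hs1 ν (hνν1.trans hξ)
      · have h1 : deltaSeq (ht hwo x₀) s ν < α := IHd ν hνν1 (hνν1.trans hξ)
        rw [Ordinal.add_one_eq_succ]
        exact hlimα.succ_lt h1
    · rw [hδlim ξ hl]
      apply Ordinal.bsup_lt_ord
      · exact Cardinal.lt_ord.mp hξ
      · intro i hi
        exact IHd i hi (hi.trans hξ)
  -- the fan
  set F := fanF hwo hsplit₁ x₀ δ with hF_def
  have hinv := fanF_inv hwo hsplit₁ x₀ δ hclosed hcμ hδ0 hδsucc hδmono hδlim hdlt IH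
  -- conclusion from an upper bound of all levels below `c`
  have final : ∀ z : T, x₀ ≤ z → (∀ ν < c, δ ν ≤ ht hwo z) → ∃ y, x₀ ≤ y ∧ α ≤ ht hwo y := by
    intro z hxz hht
    refine ⟨z, hxz, ?_⟩
    by_contra hzα
    push_neg at hzα
    obtain ⟨ξ, hξc, hξ⟩ := hs2 (ht hwo z + 1)
      (by rw [Ordinal.add_one_eq_succ]; exact hlimα.succ_lt hzα)
    have h1 : s ξ ≤ δ (ξ + 1) := by
      rw [hδ_def, deltaSeq_succ]; exact le_max_left _ _
    have h2 : δ (ξ + 1) ≤ ht hwo z := by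
      apply hht
      have := hclimit.succ_lt hξc
      rwa [← Ordinal.add_one_eq_succ] at this
    have h3 : ht hwo z + 1 ≤ ht hwo z := hξ.trans (h1.trans h2)
    rw [Ordinal.add_one_eq_succ] at h3
    exact lt_irrefl _ (Order.succ_le_iff.mp h3)
  rcases lt_or_eq_of_le hcμ with hlt | heq
  · -- cof α < μ : use μ-closedness
    set f₀ : Ordinal.{u} → Bool := fun _ => false with hf₀
    set C := (fun ν => F ν f₀) '' Set.Iio c with hC_def
    have hchain : IsChain (· ≤ ·) C := by
      rintro _ ⟨ν₁, h₁, rfl⟩ _ ⟨ν₂, h₂, rfl⟩ _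
      rcases le_total ν₁ ν₂ with h | h
      · exact Or.inl ((hinv ν₂ h₂ f₀).2.1 ν₁ h)
      · exact Or.inr ((hinv ν₁ h₁ f₀).2.1 ν₂ h)
    have hcard : #C < μ := card_image_Iio_lt _ hlt
    obtain ⟨z, hz⟩ := hclosed C hchain hcard
    refine final z ?_ ?_
    · have h1 := hz (F 0 f₀) ⟨0, hclimit.pos, rfl⟩
      rwa [hF_def, fanF_zero] at h1
    · intro ν hν
      rw [← (hinv ν hν f₀).1]
      exact ht_le_of_le hwo (hz _ ⟨ν, hν, rfl⟩)
  · -- cof α = μ : use the fan hypothesis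
    obtain ⟨gb, z, hz⟩ := hfan δ F
      (fun a _ b _ hab => hδmono b a hab)
      (fun ξ _ hl => deltaSeq_limit _ _ hl)
      (fun ξ _ f g h => fanF_coh hwo hsplit₁ x₀ δ ξ f g h)
      (fun ξ hξ ν hν f => (hinv ξ (heq ▸ hξ) f).2.1 ν hν)
      (fun ξ hξ f => (hinv ξ (heq ▸ hξ) f).1)
      (fun ξ hξ f =>
        fanF_glb hwo hsplit₁ x₀ δ hclosed hcμ hδ0 hδsucc hδmono hδlim hdlt IH ξ
          (heq ▸ hξ) f)
    refine final z ?_ ?_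
    · have h0 : (0 : Ordinal.{u}) < μ.ord := heq ▸ hclimit.pos
      have h1 := hz 0 h0
      rwa [hF_def, fanF_zero] at h1
    · intro ν hν
      rw [← (hinv ν hν gb).1]
      exact ht_le_of_le hwo (hz ν (heq ▸ hν))

end Key

/-- Assume `μ^{<μ} = μ`.  Every splitting `μ`-fan-closed `(∞, μ⁺)`-tree is a normal
tree of height `μ⁺`: every node has extensions of arbitrarily large height `< μ⁺`.

Here a tree (a partial order with well-ordered sets of predecessors) is splitting if
distinct nodes of limit height have distinct sets of predecessors and every node has at
least two immediate successors; it is a `(∞, μ⁺)`-tree if every chain has length `< μ⁺`;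
it is `μ`-fan closed if it is `μ`-closed as a forcing notion (every chain of length
`< μ` has an upper bound) and every `μ`-fan — a family `(x_f : f ∈ 2^{<μ})` with a
strictly increasing continuous sequence of heights `(δ_ξ : ξ < μ)`, with
`height x_f = δ_{dom f}` and `inf {x_{f⌢0}, x_{f⌢1}} = x_f` — has a cofinal branch
with an upper bound in `T`. -/
theorem stmt_8 {T : Type u} [PartialOrder T] (μ : Cardinal.{u})
    (hμ : ℵ₀ ≤ μ) (hpow : μ ^< μ = μ)
    (hwo : ∀ x : T, IsWellOrder (Set.Iio x) (Subrel ((· < ·) : T → T → Prop) (Set.Iio x)))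
    (hbranch : ∀ c : Set T, IsChain (· ≤ ·) c → #c < Order.succ μ)
    (hsplit₁ : ∀ x : T, ∃ y z : T, x ⋖ y ∧ x ⋖ z ∧ y ≠ z)
    (hsplit₂ : ∀ x y : T, Set.Iio x = Set.Iio y → (Set.Iio x).Nonempty →
      (¬ ∃ m ∈ Set.Iio x, ∀ z ∈ Set.Iio x, z ≤ m) → x = y)
    (hclosed : ∀ c : Set T, IsChain (· ≤ ·) c → #c < μ → ∃ ub : T, ∀ x ∈ c, x ≤ ub)
    (hfan : ∀ (δ : Ordinal.{u} → Ordinal.{u}) (x : Ordinal.{u} → (Ordinal.{u} → Bool) → T),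
      StrictMonoOn δ (Set.Iio μ.ord) →
      (∀ ξ < μ.ord, Order.IsSuccLimit ξ → δ ξ = sSup (δ '' Set.Iio ξ)) →
      (∀ ξ < μ.ord, ∀ f g : Ordinal.{u} → Bool, (∀ ν < ξ, f ν = g ν) → x ξ f = x ξ g) →
      (∀ ξ, ξ < μ.ord → ∀ ν ≤ ξ, ∀ f : Ordinal.{u} → Bool, x ν f ≤ x ξ f) →
      (∀ ξ < μ.ord, ∀ f : Ordinal.{u} → Bool, ht hwo (x ξ f) = δ ξ) →
      (∀ ξ, ξ + 1 < μ.ord → ∀ f : Ordinal.{u} → Bool,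
        IsGLB {x (ξ + 1) (Function.update f ξ false), x (ξ + 1) (Function.update f ξ true)}
          (x ξ f)) →
      ∃ (g : Ordinal.{u} → Bool) (z : T), ∀ ξ < μ.ord, x ξ g ≤ z) :
    ∀ (x : T) (α : Ordinal.{u}), α < (Order.succ μ).ord →
      ∃ y : T, x ≤ y ∧ α ≤ ht hwo y := by
  intro x α
  induction α using Ordinal.induction generalizing x with
  | _ α IHα =>
  intro hα
  rcases Ordinal.zero_or_succ_or_isSuccLimit α with rfl | ⟨β, rfl⟩ | hlim
  · exact ⟨x, le_rfl, zero_le⟩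
  · have hβ : β < Order.succ β := Order.lt_succ β
    obtain ⟨y, hxy, hy⟩ := IHα β hβ x (hβ.trans hα)
    obtain ⟨z0, z1, hz0, -, -⟩ := hsplit₁ y
    refine ⟨z0, hxy.trans hz0.1.le, ?_⟩
    exact Order.succ_le_of_lt (lt_of_le_of_lt hy (ht_lt_of_lt hwo hz0.1))
  · by_cases hx : α ≤ ht hwo x
    · exact ⟨x, le_rfl, hx⟩
    · push_neg at hx
      exact key_step μ hμ hwo hsplit₁ hclosed hfan x α hα hlim hx
        (fun β hβ x' => IHα β hβ x' (hβ.trans hα))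
end

section
/- Suppose 2^{ℵ₀} < 2^{ℵ₁}. Then there is a function F : 2^{<ω₁} → 2 such that every ℵ₀-fan of the full binary tree 2^{<ω₁} has two cofinal branches whose unions x, y satisfy F(x) ≠ F(y). -/
open Cardinal Set

universe u

section Bernstein

variable {U ι : Type u}

lemma exists_pair_avoid {c : Cardinal.{u}} (hc : ℵ₀ ≤ c) {S B : Set U}
    (hS : c ≤ #S) (hB : #B < c) :
    ∃ q : U × U, q.1 ∈ S ∧ q.2 ∈ S ∧ q.1 ≠ q.2 ∧ q.1 ∉ B ∧ q.2 ∉ B := by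
  have hd : c ≤ #(S \ B : Set U) := by
    by_contra hlt
    push_neg at hlt
    have hsub : S ⊆ (S \ B) ∪ B := fun u hu => by
      by_cases hb : u ∈ B
      · exact Or.inr hb
      · exact Or.inl ⟨hu, hb⟩
    have h2 := (mk_le_mk_of_subset hsub).trans (mk_union_le _ _)
    exact absurd (hS.trans h2) (not_le.mpr (add_lt_of_lt hc hlt hB))
  have h1 : (1 : Cardinal) < #(S \ B : Set U) :=
    lt_of_lt_of_le (one_lt_aleph0.trans_le hc) hd
  rw [one_lt_iff_nontrivial] at h1
  obtain ⟨⟨a, ha⟩, ⟨b, hb⟩, hab⟩ := h1.exists_pair_ne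
  exact ⟨(a, b), ha.1, hb.1, fun e => hab (Subtype.ext e), ha.2, hb.2⟩

lemma avoid_card {c : Cardinal.{u}} (hc : ℵ₀ ≤ c) (w : c.ord.ToType)
    (f g : Set.Iio w → U) : #(↑(range f ∪ range g) : Set U) < c :=
  lt_of_le_of_lt (mk_union_le _ _)
    (add_lt_of_lt hc (mk_range_le.trans_lt (mk_Iio_ord_toType w))
      (mk_range_le.trans_lt (mk_Iio_ord_toType w)))

open Classical in
noncomputable def pickAux (c : Cardinal.{u}) (hc : ℵ₀ ≤ c) (S : ι → Set U)
    (hS : ∀ i, c ≤ #(S i)) (e : ι ↪ c.ord.ToType) (hU : Nonempty U) :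
    c.ord.ToType → U × U :=
  WellFounded.fix wellFounded_lt (fun w IH =>
    if h : ∃ i, e i = w then
      (exists_pair_avoid hc (hS h.choose)
        (avoid_card hc w (fun v : Set.Iio w => (IH v.1 v.2).1)
          (fun v : Set.Iio w => (IH v.1 v.2).2))).choose
    else (Classical.arbitrary U, Classical.arbitrary U))

open Classical in
lemma pickAux_eq (c : Cardinal.{u}) (hc : ℵ₀ ≤ c) (S : ι → Set U)
    (hS : ∀ i, c ≤ #(S i)) (e : ι ↪ c.ord.ToType) (hU : Nonempty U)
    (w : c.ord.ToType) :
    pickAux c hc S hS e hU w =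
      (if h : ∃ i, e i = w then
        (exists_pair_avoid hc (hS h.choose)
          (avoid_card hc w (fun v : Set.Iio w => (pickAux c hc S hS e hU v.1).1)
            (fun v : Set.Iio w => (pickAux c hc S hS e hU v.1).2))).choose
      else (Classical.arbitrary U, Classical.arbitrary U)) := by
  conv_lhs => rw [pickAux, WellFounded.fix_eq]
  rfl

lemma bernstein_coloring (c : Cardinal.{u}) (hc : ℵ₀ ≤ c) (S : ι → Set U)
    (hι : #ι ≤ c) (hS : ∀ i, c ≤ #(S i)) :
    ∃ G : U → Bool, ∀ i, ∃ a ∈ S i, ∃ b ∈ S i, G a ≠ G b := by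
  classical
  cases isEmpty_or_nonempty ι with
  | inl hempty => exact ⟨fun _ => true, fun i => (hempty.false i).elim⟩
  | inr hne =>
    obtain ⟨i₀⟩ := hne
    have hU : Nonempty U := by
      have h0 : #(S i₀) ≠ 0 := ne_of_gt ((aleph0_pos.trans_le hc).trans_le (hS i₀))
      obtain ⟨⟨u, _⟩⟩ := mk_ne_zero_iff.mp h0
      exact ⟨u⟩
    obtain ⟨e⟩ : Nonempty (ι ↪ c.ord.ToType) := by
      rw [← mk_ord_toType c] at hι
      exact Cardinal.le_def _ _ |>.mp hι
    set P := pickAux c hc S hS e hU with hP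
    have spec : ∀ i : ι, (P (e i)).1 ∈ S i ∧ (P (e i)).2 ∈ S i ∧ (P (e i)).1 ≠ (P (e i)).2 ∧
        (∀ v, v < e i → (P (e i)).1 ≠ (P v).1 ∧ (P (e i)).1 ≠ (P v).2 ∧
          (P (e i)).2 ≠ (P v).1 ∧ (P (e i)).2 ≠ (P v).2) := by
      intro i
      have hex : ∃ j, e j = e i := ⟨i, rfl⟩
      have hji : hex.choose = i := e.injective hex.choose_spec
      have heq := pickAux_eq c hc S hS e hU (e i)
      rw [dif_pos hex] at heq
      obtain ⟨q1S, q2S, qne, q1B, q2B⟩ := (exists_pair_avoid hc (hS hex.choose)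
        (avoid_card hc (e i) (fun v : Set.Iio (e i) => (pickAux c hc S hS e hU v.1).1)
          (fun v : Set.Iio (e i) => (pickAux c hc S hS e hU v.1).2))).choose_spec
      rw [← heq] at q1S q2S qne q1B q2B
      rw [hji] at q1S q2S
      refine ⟨q1S, q2S, qne, fun v hv => ?_⟩
      refine ⟨?_, ?_, ?_, ?_⟩
      · exact fun hc' => q1B (Or.inl ⟨⟨v, hv⟩, hc'.symm⟩)
      · exact fun hc' => q1B (Or.inr ⟨⟨v, hv⟩, hc'.symm⟩)
      · exact fun hc' => q2B (Or.inl ⟨⟨v, hv⟩, hc'.symm⟩)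
      · exact fun hc' => q2B (Or.inr ⟨⟨v, hv⟩, hc'.symm⟩)
    refine ⟨fun u => decide (∃ i, (P (e i)).1 = u), fun i => ?_⟩
    refine ⟨(P (e i)).1, (spec i).1, (P (e i)).2, (spec i).2.1, ?_⟩
    show decide (∃ j, (P (e j)).1 = (P (e i)).1) ≠ decide (∃ j, (P (e j)).1 = (P (e i)).2)
    have hGa : decide (∃ j, (P (e j)).1 = (P (e i)).1) = true := decide_eq_true ⟨i, rfl⟩
    have hGb : decide (∃ j, (P (e j)).1 = (P (e i)).2) = false := by
      apply decide_eq_false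
      rintro ⟨j, hj⟩
      rcases lt_trichotomy (e j) (e i) with hlt | heq | hgt
      · exact ((spec i).2.2.2 (e j) hlt).2.2.1 hj.symm
      · have : j = i := e.injective heq
        subst this
        exact (spec j).2.2.1 hj
      · exact ((spec j).2.2.2 (e i) hgt).2.1 hj
    rw [hGa, hGb]
    simp

end Bernstein

section Fan

variable (δ : ℕ → Ordinal.{u}) (x : List Bool → Ordinal.{u} → Bool)

open Classical in
noncomputable def branchU (g : ℕ → Bool) : Ordinal.{u} → Bool := fun β =>
  if h : ∃ n, β < δ n then x (List.ofFn fun i : Fin (Nat.find h) => g i) β else false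

lemma fan_coh (hmono : StrictMono δ)
    (hcoh : ∀ (s : List Bool) (b : Bool) (β : Ordinal), β < δ s.length →
      x (s ++ [b]) β = x s β) (g : ℕ → Bool) :
    ∀ n m, m ≤ n → ∀ β, β < δ m →
      x (List.ofFn fun i : Fin n => g i) β = x (List.ofFn fun i : Fin m => g i) β := by
  intro n
  induction n with
  | zero =>
    intro m hm β _
    obtain rfl : m = 0 := Nat.le_zero.mp hm
    rfl
  | succ n IH =>
    intro m hm β hβ
    rcases eq_or_lt_of_le hm with heq | hlt
    · subst heq; rfl
    · have hm' : m ≤ n := Nat.lt_succ_iff.mp hlt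
      have hsplit : (List.ofFn fun i : Fin (n+1) => g i)
          = (List.ofFn fun i : Fin n => g i) ++ [g n] := by
        rw [List.ofFn_succ']
        simp [List.concat_eq_append]
      rw [hsplit, hcoh _ (g n) β
        (by simpa using hβ.trans_le (hmono.monotone hm'))]
      exact IH m hm' β hβ

lemma branchU_eq (hmono : StrictMono δ)
    (hcoh : ∀ (s : List Bool) (b : Bool) (β : Ordinal), β < δ s.length →
      x (s ++ [b]) β = x s β) (g : ℕ → Bool) (n : ℕ) (β : Ordinal) (hβ : β < δ n) :
    branchU δ x g β = x (List.ofFn fun i : Fin n => g i) β := by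
  classical
  have h : ∃ m, β < δ m := ⟨n, hβ⟩
  rw [branchU, dif_pos h]
  exact (fan_coh δ x hmono hcoh g n (Nat.find h) (Nat.find_min' h hβ) β
    (Nat.find_spec h)).symm

lemma branchU_inj (hmono : StrictMono δ)
    (hcoh : ∀ (s : List Bool) (b : Bool) (β : Ordinal), β < δ s.length →
      x (s ++ [b]) β = x s β)
    (hne : ∀ s : List Bool, x (s ++ [false]) (δ s.length) ≠ x (s ++ [true]) (δ s.length)) :
    Function.Injective (branchU δ x) := by
  classical
  intro g₁ g₂ hgg
  by_contra hne'
  have hx : ∃ n, g₁ n ≠ g₂ n := Function.ne_iff.mp hne'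
  set n := Nat.find hx with hn
  have hsame : (List.ofFn fun i : Fin n => g₁ i) = (List.ofFn fun i : Fin n => g₂ i) := by
    congr 1
    funext i
    have := Nat.find_min hx i.2
    exact not_not.mp this
  have hofn : ∀ g : ℕ → Bool, (List.ofFn fun i : Fin (n+1) => g i)
      = (List.ofFn fun i : Fin n => g i) ++ [g n] := by
    intro g
    rw [List.ofFn_succ']
    simp [List.concat_eq_append]
  have h1 : branchU δ x g₁ (δ n) = x ((List.ofFn fun i : Fin n => g₁ i) ++ [g₁ n]) (δ n) := by
    rw [branchU_eq δ x hmono hcoh g₁ (n+1) (δ n) (hmono (Nat.lt_succ_self n)), hofn g₁]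
  have h2 : branchU δ x g₂ (δ n) = x ((List.ofFn fun i : Fin n => g₁ i) ++ [g₂ n]) (δ n) := by
    rw [branchU_eq δ x hmono hcoh g₂ (n+1) (δ n) (hmono (Nat.lt_succ_self n)), hofn g₂, hsame]
  have hlen : (List.ofFn fun i : Fin n => g₁ i).length = n := List.length_ofFn
  have hb : g₁ n ≠ g₂ n := Nat.find_spec hx
  have hxx : x ((List.ofFn fun i : Fin n => g₁ i) ++ [g₁ n]) (δ n)
      ≠ x ((List.ofFn fun i : Fin n => g₁ i) ++ [g₂ n]) (δ n) := by
    have := hne (List.ofFn fun i : Fin n => g₁ i)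
    rw [hlen] at this
    cases hb1 : g₁ n <;> cases hb2 : g₂ n <;> simp [hb1, hb2] at hb ⊢
    · exact this
    · exact this.symm
  exact hxx (by rw [← h1, ← h2, hgg])

end Fan
section Main

noncomputable abbrev OmV : Ordinal.{u} := (Cardinal.aleph 1).ord

def Vset : Set (Ordinal.{u} → Bool) := {f | ∃ γ < OmV, ∀ β, γ ≤ β → f β = false}

lemma card_le_aleph0_of_lt (γ : Ordinal.{u}) (hγ : γ < OmV) : γ.card ≤ ℵ₀ := by
  have h1 : γ.card < Cardinal.aleph 1 := Cardinal.lt_ord.mp hγ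
  rwa [show ((1 : Ordinal) = Order.succ 0) by simp, aleph_succ, Order.lt_succ_iff,
    aleph_zero] at h1

lemma mk_tail_le (γ : Ordinal.{u}) (hγ : γ < OmV) :
    #{f : Ordinal.{u} → Bool | ∀ β, γ ≤ β → f β = false} ≤ continuum.{u+1} := by
  have hinj : Function.Injective
      (fun f : {f : Ordinal.{u} → Bool | ∀ β, γ ≤ β → f β = false} =>
        (fun β : Iio γ => f.1 β.1 : Iio γ → Bool)) := by
    intro f g hfg
    apply Subtype.ext
    funext β
    rcases lt_or_ge β γ with hβ | hβ
    · exact congrFun hfg ⟨β, hβ⟩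
    · rw [f.2 β hβ, g.2 β hβ]
  apply (mk_le_of_injective hinj).trans
  rw [mk_arrow, mk_bool, lift_two, Ordinal.mk_Iio_ordinal, lift_uzero]
  have hle : lift.{u+1} γ.card ≤ (ℵ₀ : Cardinal.{u+1}) := by
    simpa using lift_le.mpr (card_le_aleph0_of_lt γ hγ)
  calc (2 : Cardinal.{u+1}) ^ lift.{u+1} γ.card ≤ 2 ^ (ℵ₀ : Cardinal.{u+1}) :=
        power_le_power_left two_ne_zero hle
    _ = continuum := two_power_aleph0

lemma mk_Iio_OmV_le : #(Iio OmV) ≤ continuum.{u+1} := by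
  rw [Ordinal.mk_Iio_ordinal, Cardinal.card_ord]
  calc lift.{u+1} (Cardinal.aleph 1) ≤ lift.{u+1} continuum := lift_le.mpr aleph_one_le_continuum
    _ = continuum := lift_continuum

lemma mk_Vset_le : #Vset ≤ continuum.{u+1} := by
  have hsub : Vset ⊆ ⋃ γ : Iio OmV, {f : Ordinal.{u} → Bool | ∀ β, γ.1 ≤ β → f β = false} := by
    rintro f ⟨γ, hγ, hf⟩
    exact mem_iUnion.mpr ⟨⟨γ, hγ⟩, hf⟩
  apply (mk_le_mk_of_subset hsub).trans
  apply (mk_iUnion_le _).trans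
  haveI hONE : Nonempty (Iio OmV) := by
    refine ⟨⟨0, ?_⟩⟩
    rw [mem_Iio, Cardinal.lt_ord]
    simpa using aleph_pos 1
  have h2 : ⨆ γ : Iio OmV, #{f : Ordinal.{u} → Bool | ∀ β, γ.1 ≤ β → f β = false}
      ≤ continuum.{u+1} := ciSup_le' fun γ => mk_tail_le γ.1 γ.2
  calc #(Iio OmV) * ⨆ γ : Iio OmV, #{f : Ordinal.{u} → Bool | ∀ β, γ.1 ≤ β → f β = false}
      ≤ continuum * continuum := mul_le_mul' mk_Iio_OmV_le h2
    _ = continuum := mul_eq_self aleph0_le_continuum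

def CodeT : Type (u+1) :=
  {p : (ℕ → Ordinal.{u}) × (List Bool → Ordinal.{u} → Bool) //
    StrictMono p.1 ∧ (∀ n, p.1 n < OmV) ∧
    (∀ (s : List Bool) (b : Bool) (β : Ordinal), β < p.1 s.length →
      p.2 (s ++ [b]) β = p.2 s β) ∧
    (∀ s : List Bool, p.2 (s ++ [false]) (p.1 s.length) ≠ p.2 (s ++ [true]) (p.1 s.length)) ∧
    (∀ (s : List Bool) (β : Ordinal), p.1 s.length ≤ β → p.2 s β = false)}

lemma mk_CodeT_le : #CodeT ≤ continuum.{u+1} := by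
  have hJ : Function.Injective (fun p : CodeT =>
      ((fun n => ⟨p.1.1 n, p.2.2.1 n⟩ : ℕ → (Iio OmV : Set Ordinal)),
       (fun s => ⟨p.1.2 s, ⟨p.1.1 s.length, p.2.2.1 _, fun β hβ => p.2.2.2.2.2 s β hβ⟩⟩ :
         List Bool → Vset))) := by
    intro p q hpq
    have h1 := congrArg Prod.fst hpq
    have h2 := congrArg Prod.snd hpq
    apply Subtype.ext
    apply Prod.ext
    · funext n
      exact congrArg Subtype.val (congrFun h1 n)
    · funext s
      exact congrArg Subtype.val (congrFun h2 s)
  apply (mk_le_of_injective hJ).trans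
  have hA : #(ℕ → (Iio OmV : Set Ordinal)) ≤ continuum.{u+1} := by
    rw [mk_arrow, lift_uzero]
    have hn : lift.{u+1} #ℕ = (ℵ₀ : Cardinal.{u+1}) := by simp
    rw [hn]
    calc #(Iio OmV : Set Ordinal) ^ (ℵ₀ : Cardinal.{u+1})
        ≤ continuum ^ (ℵ₀ : Cardinal.{u+1}) := power_le_power_right mk_Iio_OmV_le
      _ = continuum := continuum_power_aleph0
  have hB : #(List Bool → Vset) ≤ continuum.{u+1} := by
    rw [mk_arrow, lift_uzero]
    have hn : lift.{u+1} #(List Bool) = (ℵ₀ : Cardinal.{u+1}) := by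
      rw [mk_list_eq_aleph0]; simp
    rw [hn]
    calc #Vset ^ (ℵ₀ : Cardinal.{u+1})
        ≤ continuum ^ (ℵ₀ : Cardinal.{u+1}) := power_le_power_right mk_Vset_le
      _ = continuum := continuum_power_aleph0
  rw [mk_prod, lift_id, lift_id]
  calc #(ℕ → (Iio OmV : Set Ordinal)) * #(List Bool → Vset)
      ≤ continuum * continuum := mul_le_mul' hA hB
    _ = continuum := mul_eq_self aleph0_le_continuum

lemma continuum_le_mk_range (δ : ℕ → Ordinal.{u}) (x : List Bool → Ordinal.{u} → Bool)
    (hmono : StrictMono δ)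
    (hcoh : ∀ (s : List Bool) (b : Bool) (β : Ordinal), β < δ s.length →
      x (s ++ [b]) β = x s β)
    (hne : ∀ s : List Bool, x (s ++ [false]) (δ s.length) ≠ x (s ++ [true]) (δ s.length)) :
    continuum.{u+1} ≤ #(range (branchU δ x)) := by
  have hinj : Function.Injective (fun g : ULift.{u+1} (ℕ → Bool) =>
      (⟨branchU δ x g.down, mem_range_self _⟩ : range (branchU δ x))) := by
    intro g₁ g₂ hg
    have := branchU_inj δ x hmono hcoh hne (congrArg Subtype.val hg)
    cases g₁; cases g₂; simpa using this
  have hle := mk_le_of_injective hinj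
  have hc : #(ℕ → Bool) = continuum.{0} := by
    rw [← power_def, mk_bool, mk_nat, two_power_aleph0]
  rwa [mk_uLift, hc, lift_continuum] at hle

end Main

theorem main_aux :
    ∃ F : Ordinal.{u} → (Ordinal.{u} → Bool) → Bool,
      (∀ (α : Ordinal) (f g : Ordinal → Bool), (∀ β < α, f β = g β) → F α f = F α g) ∧
      ∀ (δ : ℕ → Ordinal) (x : List Bool → Ordinal → Bool),
        StrictMono δ → (∀ n, δ n < (Cardinal.aleph 1).ord) →
        (∀ (s : List Bool) (b : Bool) (β : Ordinal), β < δ s.length →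
          x (s ++ [b]) β = x s β) →
        (∀ s : List Bool, x (s ++ [false]) (δ s.length) ≠ x (s ++ [true]) (δ s.length)) →
        ∃ (g₁ g₂ : ℕ → Bool) (u₁ u₂ : Ordinal → Bool),
          (∀ (n : ℕ) (β : Ordinal), β < δ n →
            u₁ β = x (List.ofFn fun i : Fin n => g₁ i) β) ∧
          (∀ (n : ℕ) (β : Ordinal), β < δ n →
            u₂ β = x (List.ofFn fun i : Fin n => g₂ i) β) ∧
          F (⨆ n, δ n) u₁ ≠ F (⨆ n, δ n) u₂ := by
  classical
  obtain ⟨G, hG⟩ := bernstein_coloring continuum.{u+1} aleph0_le_continuum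
    (fun p : CodeT => range (branchU p.1.1 p.1.2)) mk_CodeT_le
    (fun p => continuum_le_mk_range p.1.1 p.1.2 p.2.1 p.2.2.2.1 p.2.2.2.2.1)
  refine ⟨fun α f => G (fun β => if β < α then f β else false), ?_, ?_⟩
  · intro α f g hfg
    have hqq : (fun β => if β < α then f β else false)
        = (fun β => if β < α then g β else false) := by
      funext β
      by_cases hβ : β < α
      · rw [if_pos hβ, if_pos hβ, hfg β hβ]
      · rw [if_neg hβ, if_neg hβ]
    exact congrArg G hqq
  · intro δ x hmono hδΩ hcoh hsplit
    set x' : List Bool → Ordinal.{u} → Bool :=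
      fun s β => if β < δ s.length then x s β else false with hx'
    have hcoh' : ∀ (s : List Bool) (b : Bool) (β : Ordinal), β < δ s.length →
        x' (s ++ [b]) β = x' s β := by
      intro s b β hβ
      have h1 : β < δ (s ++ [b]).length := by
        simpa using hβ.trans (hmono (Nat.lt_succ_self s.length))
      simp only [hx']
      rw [if_pos h1, if_pos hβ]
      exact hcoh s b β hβ
    have hsplit' : ∀ s : List Bool,
        x' (s ++ [false]) (δ s.length) ≠ x' (s ++ [true]) (δ s.length) := by
      intro s
      have h1 : δ s.length < δ ((s ++ [false]).length) := by
        simpa using hmono (Nat.lt_succ_self s.length)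
      have h2 : δ s.length < δ ((s ++ [true]).length) := by
        simpa using hmono (Nat.lt_succ_self s.length)
      simp only [hx']
      rw [if_pos h1, if_pos h2]
      exact hsplit s
    have htrunc : ∀ (s : List Bool) (β : Ordinal), δ s.length ≤ β → x' s β = false := by
      intro s β hβ
      simp [hx', not_lt.mpr hβ]
    obtain ⟨a, ha, b, hb, hab⟩ :=
      hG ⟨(δ, x'), hmono, hδΩ, hcoh', hsplit', htrunc⟩
    obtain ⟨g₁, hg₁⟩ := ha
    obtain ⟨g₂, hg₂⟩ := hb
    have hg₁' : branchU δ x' g₁ = a := hg₁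
    have hg₂' : branchU δ x' g₂ = b := hg₂
    refine ⟨g₁, g₂, branchU δ x' g₁, branchU δ x' g₂, ?_, ?_, ?_⟩
    · intro n β hβ
      rw [branchU_eq δ x' hmono hcoh' g₁ n β hβ]
      simp [hx', hβ]
    · intro n β hβ
      rw [branchU_eq δ x' hmono hcoh' g₂ n β hβ]
      simp [hx', hβ]
    · have trunc_eq : ∀ g : ℕ → Bool,
          (fun β => if β < (⨆ n, δ n) then branchU δ x' g β else false) = branchU δ x' g := by
        intro g
        funext β
        by_cases hβ : β < ⨆ n, δ n
        · simp [hβ]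
        · have hz : branchU δ x' g β = false := by
            rw [branchU, dif_neg]
            rintro ⟨n, hn⟩
            exact hβ (hn.trans_le (le_ciSup (Ordinal.bddAbove_range δ) n))
          rw [if_neg hβ, hz]
      show G (fun β => if β < (⨆ n, δ n) then branchU δ x' g₁ β else false)
          ≠ G (fun β => if β < (⨆ n, δ n) then branchU δ x' g₂ β else false)
      rw [trunc_eq g₁, trunc_eq g₂, hg₁', hg₂']
      exact hab



/-- Suppose `2^{ℵ₀} < 2^{ℵ₁}`.  Then there is a function `F : 2^{<ω₁} → 2` (coded as
`F α f`, depending only on `f ↾ α`) such that every `ℵ₀`-fan of the full binary tree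
`2^{<ω₁}` — given by a strictly increasing sequence `(δ_n : n < ω)` of countable
ordinals and a coherent family `(x_s : s ∈ 2^{<ω})` where `x_s` has domain
`δ_{length s}` and `x_{s⌢0}`, `x_{s⌢1}` split exactly at `δ_{length s}` — has two
cofinal branches whose unions `u₁`, `u₂` (of domain `sup_n δ_n`) satisfy
`F (sup_n δ_n) u₁ ≠ F (sup_n δ_n) u₂`. -/
theorem stmt_9 (h : (2 : Cardinal) ^ Cardinal.aleph0 < 2 ^ Cardinal.aleph 1) :
    ∃ F : Ordinal → (Ordinal → Bool) → Bool,
      (∀ (α : Ordinal) (f g : Ordinal → Bool), (∀ β < α, f β = g β) → F α f = F α g) ∧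
      ∀ (δ : ℕ → Ordinal) (x : List Bool → Ordinal → Bool),
        StrictMono δ → (∀ n, δ n < (Cardinal.aleph 1).ord) →
        (∀ (s : List Bool) (b : Bool) (β : Ordinal), β < δ s.length →
          x (s ++ [b]) β = x s β) →
        (∀ s : List Bool, x (s ++ [false]) (δ s.length) ≠ x (s ++ [true]) (δ s.length)) →
        ∃ (g₁ g₂ : ℕ → Bool) (u₁ u₂ : Ordinal → Bool),
          (∀ (n : ℕ) (β : Ordinal), β < δ n →
            u₁ β = x (List.ofFn fun i : Fin n => g₁ i) β) ∧
          (∀ (n : ℕ) (β : Ordinal), β < δ n →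
            u₂ β = x (List.ofFn fun i : Fin n => g₂ i) β) ∧
          F (⨆ n, δ n) u₁ ≠ F (⨆ n, δ n) u₂ := by
  exact main_aux
end

section
/- Let κ > ℵ₁ be regular and (u_β : β < κ) a coherent sequence as above. Suppose for some fixed β* the set S^*_{β*} ∩ S^κ_{ω₁} is non-stationary, witnessed by a club C disjoint from it. Then by Fodor's lemma applied to f(γ) = min(u_γ ∖ β*) on S^κ_{ω₁} ∖ (β*+1) there is δ* > β* with β* ∉ u_{δ*} and S ⊆ S^κ_{ω₁} ∩ C stationary with S ⊆ S^*_{δ*}; in particular S^*_{δ*} ∩ S^κ_{ω₁} is stationary and S^*_{δ*} ∩ S^*_{β*} = ∅. -/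
open Cardinal Set

def IsStationaryIn (S : Set Ordinal) (δ : Ordinal) : Prop :=
  ∀ C : Set Ordinal, IsClubIn C δ → (S ∩ C).Nonempty

/-- `S^κ_{ω₁} = {α < κ : cf α = ω₁}`. -/
def Skw1 (κ : Cardinal) : Set Ordinal := {α | α < κ.ord ∧ α.cof = Cardinal.aleph 1}

section Aux
open Ordinal Order
variable {κ : Cardinal} {C D : Set Ordinal} {θ : Ordinal}

/-- key closure lemma -/
theorem club_sSup_mem (hC : IsClubIn C θ) (hD : D ⊆ C) (hne : D.Nonempty)
    (hlt : sSup D < θ) (hns : sSup D ∉ D) : sSup D ∈ C := by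
  have hbdd : BddAbove D := ⟨θ, fun x hx => (hC.1 (hD hx)).le⟩
  have hub : ∀ d ∈ D, d ≤ sSup D := fun d hd => le_csSup hbdd hd
  have hα0 : sSup D ≠ 0 := by
    intro h0
    obtain ⟨d, hd⟩ := hne
    have hd0 : d = 0 := le_antisymm (h0 ▸ hub d hd) (zero_le (a := d))
    exact hns (by rw [h0, ← hd0]; exact hd)
  have hsub : D ⊆ C ∩ Iio (sSup D) := fun d hd =>
    ⟨hD hd, lt_of_le_of_ne (hub d hd) (fun h => hns (h ▸ hd))⟩
  have heq : sSup (C ∩ Iio (sSup D)) = sSup D :=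
    le_antisymm (csSup_le (hne.mono hsub) (fun x hx => hx.2.le))
      (csSup_le_csSup ⟨sSup D, fun x hx => hx.2.le⟩ hne hsub)
  exact hC.2.2 (sSup D) hlt hα0 heq

theorem club_Iio : IsClubIn (Iio θ) θ :=
  ⟨Subset.rfl, fun α hα => ⟨α, hα, le_rfl⟩, fun α hα _ _ => hα⟩

theorem iter_sup (hcof : ℵ₀ < θ.cof) (next : Ordinal → Ordinal)
    (h1 : ∀ x < θ, x < next x) (h2 : ∀ x < θ, next x < θ)
    {α : Ordinal} (hα : α < θ) :
    ∃ γ, α < γ ∧ γ < θ ∧ StrictMono (fun n : ℕ => next^[n] α) ∧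
      (∀ n : ℕ, next^[n] α < θ) ∧ (∀ n : ℕ, next^[n] α < γ) ∧ γ = ⨆ n : ℕ, next^[n] α := by
  set g : ℕ → Ordinal := fun n => next^[n] α with hg
  have hgθ : ∀ n, g n < θ := by
    intro n; induction n with
    | zero => exact hα
    | succ n ih => rw [hg]; simp only; rw [Function.iterate_succ_apply']; exact h2 _ ih
  have hmono : StrictMono g := strictMono_nat_of_lt_succ (fun n => by
    rw [hg]; simp only; rw [Function.iterate_succ_apply']; exact h1 _ (hgθ n))
  have hγθ : (⨆ n : ℕ, g n) < θ := by
    refine iSup_lt_ord_lift ?_ hgθ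
    rwa [Cardinal.mk_denumerable, Cardinal.lift_aleph0]
  have hbdd : BddAbove (range g) := ⟨θ, by rintro x ⟨n, rfl⟩; exact (hgθ n).le⟩
  have hlt : ∀ n, g n < ⨆ n, g n := fun n =>
    (hmono (Nat.lt_succ_self n)).trans_le (le_ciSup hbdd (n + 1))
  exact ⟨⨆ n, g n, hlt 0, hγθ, hmono, hgθ, hlt, rfl⟩


theorem clubs_inter_unbounded (hreg : κ.IsRegular) (hκ : ℵ₀ < κ)
    (Cc : Ordinal → Set Ordinal) (hCc : ∀ δ, IsClubIn (Cc δ) κ.ord)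
    {x : Ordinal} (hx : x < κ.ord) {α : Ordinal} (hα : α < κ.ord) :
    ∃ β, α ≤ β ∧ β < κ.ord ∧ ∀ δ < x, β ∈ Cc δ := by
  have hθlim : Order.IsSuccLimit κ.ord := Cardinal.isSuccLimit_ord hreg.aleph0_le
  have hcof : ℵ₀ < κ.ord.cof := by rwa [hreg.cof_eq]
  have hsucc : ∀ y, y < κ.ord → succ y < κ.ord := fun y hy => hθlim.succ_lt hy
  have hpick : ∀ y, y < κ.ord → ∀ δ, ∃ p, p ∈ Cc δ ∧ succ y ≤ p :=
    fun y hy δ => (hCc δ).2.1 (succ y) (hsucc y hy)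
  choose p hp1 hp2 using hpick
  set next : Ordinal → Ordinal := fun y =>
    if h : y < κ.ord then max (succ y) (Ordinal.bsup x (fun δ _ => p y h δ)) else 0 with hnext
  have h1 : ∀ y < κ.ord, y < next y := by
    intro y hy
    rw [hnext]; simp only [dif_pos hy]
    exact (lt_succ y).trans_le (le_max_left _ _)
  have h2 : ∀ y < κ.ord, next y < κ.ord := by
    intro y hy
    rw [hnext]; simp only [dif_pos hy]
    refine max_lt (hsucc y hy) ?_
    refine Ordinal.bsup_lt_ord ?_ (fun δ h => (hCc δ).1 (hp1 y hy δ))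
    rw [hreg.cof_eq]; exact Cardinal.lt_ord.1 hx
  obtain ⟨γ, hαγ, hγθ, hmono, hgθ, hgγ, hγeq⟩ := iter_sup hcof next h1 h2 hα
  refine ⟨γ, hαγ.le, hγθ, ?_⟩
  intro δ hδ
  set g : ℕ → Ordinal := fun n => next^[n] α with hg
  set q : ℕ → Ordinal := fun n => p (g n) (hgθ n) δ with hq
  have hq1 : ∀ n, q n ∈ Cc δ := fun n => hp1 _ _ δ
  have hq2 : ∀ n, g n < q n := fun n => (lt_succ (g n)).trans_le (hp2 _ _ δ)
  have hq3 : ∀ n, q n ≤ g (n + 1) := by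
    intro n
    have : g (n + 1) = next (g n) := Function.iterate_succ_apply' next n α
    rw [this, hnext]; simp only [dif_pos (show g n < κ.ord from hgθ n)]
    exact le_trans (Ordinal.le_bsup (fun δ _ => p (g n) (hgθ n) δ) δ hδ) (le_max_right _ _)
  have hqγ : ∀ n, q n < γ := fun n => (hq3 n).trans_lt (hgγ (n + 1))
  have hbdd : BddAbove (range q) := ⟨γ, by rintro y ⟨n, rfl⟩; exact (hqγ n).le⟩
  have hsup : sSup (range q) = γ := by
    apply le_antisymm
    · exact csSup_le (range_nonempty q) (by rintro y ⟨n, rfl⟩; exact (hqγ n).le)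
    · rw [hγeq]
      exact ciSup_le fun n => ((hq2 n).le).trans (le_csSup hbdd ⟨n, rfl⟩)
  have hns : sSup (range q) ∉ range q := by
    rw [hsup]; rintro ⟨n, hn⟩; exact (hqγ n).ne hn
  have := club_sSup_mem (hCc δ) (by rintro y ⟨n, rfl⟩; exact hq1 n) (range_nonempty q)
    (by rw [hsup]; exact hγθ) hns
  rwa [hsup] at this

theorem diag_club (hreg : κ.IsRegular) (hκ : ℵ₀ < κ)
    (Cc : Ordinal → Set Ordinal) (hCc : ∀ δ, IsClubIn (Cc δ) κ.ord) :
    IsClubIn {γ | γ < κ.ord ∧ ∀ δ < γ, γ ∈ Cc δ} κ.ord := by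
  have hθlim : Order.IsSuccLimit κ.ord := Cardinal.isSuccLimit_ord hreg.aleph0_le
  have hcof : ℵ₀ < κ.ord.cof := by rwa [hreg.cof_eq]
  refine ⟨fun γ hγ => hγ.1, ?_, ?_⟩
  · intro α hα
    have hex : ∀ y, y < κ.ord → ∃ β, succ y ≤ β ∧ β < κ.ord ∧ ∀ δ < y, β ∈ Cc δ := by
      intro y hy
      obtain ⟨β, h1, h2, h3⟩ := clubs_inter_unbounded hreg hκ Cc hCc hy (hθlim.succ_lt hy)
      exact ⟨β, h1, h2, h3⟩
    choose w hw1 hw2 hw3 using hex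
    set next : Ordinal → Ordinal := fun y => if h : y < κ.ord then w y h else 0 with hnext
    have h1 : ∀ y < κ.ord, y < next y := by
      intro y hy; rw [hnext]; simp only [dif_pos hy]
      exact (lt_succ y).trans_le (hw1 y hy)
    have h2 : ∀ y < κ.ord, next y < κ.ord := by
      intro y hy; rw [hnext]; simp only [dif_pos hy]; exact hw2 y hy
    obtain ⟨γ, hαγ, hγθ, hmono, hgθ, hgγ, hγeq⟩ := iter_sup hcof next h1 h2 hα
    set g : ℕ → Ordinal := fun n => next^[n] α with hg
    refine ⟨γ, ⟨hγθ, ?_⟩, hαγ.le⟩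
    intro δ hδ
    obtain ⟨y, ⟨n, rfl⟩, hδn⟩ : ∃ y ∈ range g, δ < y := by
      apply exists_lt_of_lt_csSup ⟨g 0, mem_range_self 0⟩
      exact (hγeq ▸ hδ : δ < iSup g)
    set q : ℕ → Ordinal := fun m => g (n + m + 1) with hq
    have hkey : ∀ m, q m ∈ Cc δ := by
      intro m
      have hmem : g (n + m + 1) = next (g (n + m)) := Function.iterate_succ_apply' next _ α
      have hδm : δ < g (n + m) := hδn.trans_le (hmono.monotone (Nat.le_add_right n m))
      rw [hq]; simp only
      rw [hmem, hnext]; simp only [dif_pos (show g (n + m) < κ.ord from hgθ (n + m))]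
      exact hw3 _ (hgθ (n + m)) δ hδm
    have hqγ : ∀ m, q m < γ := fun m => hgγ _
    have hbdd : BddAbove (range q) := ⟨γ, by rintro y ⟨m, rfl⟩; exact (hqγ m).le⟩
    have hsup : sSup (range q) = γ := by
      apply le_antisymm
      · exact csSup_le (range_nonempty q) (by rintro y ⟨m, rfl⟩; exact (hqγ m).le)
      · rw [hγeq]
        refine ciSup_le fun m => le_trans ?_ (le_csSup hbdd ⟨m, rfl⟩)
        exact hmono.monotone (by omega)
    have hns : sSup (range q) ∉ range q := by
      rw [hsup]; rintro ⟨m, hm⟩; exact (hqγ m).ne hm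
    have := club_sSup_mem (hCc δ) (by rintro y ⟨m, rfl⟩; exact hkey m) (range_nonempty q)
      (by rw [hsup]; exact hγθ) hns
    rwa [hsup] at this
  · intro α hαθ hα0 hsupα
    refine ⟨hαθ, fun δ hδα => ?_⟩
    set T := {γ | γ < κ.ord ∧ ∀ δ < γ, γ ∈ Cc δ} with hTdef
    have hTne : (T ∩ Iio α).Nonempty := by
      by_contra hemp
      rw [Set.not_nonempty_iff_eq_empty] at hemp
      rw [hemp, csSup_empty] at hsupα
      exact hα0 (hsupα.symm.trans (by rfl))
    have hDne : ∃ e ∈ T ∩ Iio α, δ < e := by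
      apply exists_lt_of_lt_csSup hTne
      rwa [hsupα]
    obtain ⟨e, he, hδe⟩ := hDne
    set Dd := T ∩ Iio α ∩ Ioi δ with hDd
    have hDdne : Dd.Nonempty := ⟨e, he, hδe⟩
    have hbdd : BddAbove Dd := ⟨α, fun y hy => hy.1.2.le⟩
    have hDdsup : sSup Dd = α := by
      apply le_antisymm (csSup_le hDdne (fun y hy => hy.1.2.le))
      by_contra hlt
      push_neg at hlt
      obtain ⟨e', he', hgt⟩ : ∃ e' ∈ T ∩ Iio α, max (sSup Dd) δ < e' := by
        apply exists_lt_of_lt_csSup hTne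
        rw [hsupα]
        exact max_lt hlt hδα
      have he'D : e' ∈ Dd := ⟨he', (le_max_right _ _).trans_lt hgt⟩
      exact absurd (le_csSup hbdd he'D) (not_le.2 ((le_max_left _ _).trans_lt hgt))
    have := club_sSup_mem (hCc δ) (fun y (hy : y ∈ Dd) => hy.1.1.2 δ hy.2) hDdne
      (by rw [hDdsup]; exact hαθ) (by rw [hDdsup]; rintro ⟨⟨-, h⟩, -⟩; exact lt_irrefl α h)
    rwa [hDdsup] at this

theorem fodor (hreg : κ.IsRegular) (hκ : ℵ₀ < κ) {T : Set Ordinal}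
    (hT : IsStationaryIn T κ.ord) (f : Ordinal → Ordinal) (hf : ∀ γ ∈ T, f γ < γ) :
    ∃ δ, IsStationaryIn (T ∩ {γ | f γ = δ}) κ.ord := by
  by_contra h
  push_neg at h
  have hex : ∀ δ, ∃ E, IsClubIn E κ.ord ∧ (T ∩ {γ | f γ = δ}) ∩ E = ∅ := by
    intro δ
    have h' := h δ
    rw [IsStationaryIn] at h'
    push_neg at h'
    obtain ⟨E, hE, hEe⟩ := h'
    exact ⟨E, hE, hEe⟩
  choose E hE1 hE2 using hex
  obtain ⟨γ, hγT, hγΔ⟩ := hT _ (diag_club hreg hκ E hE1)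
  have hmem : γ ∈ (T ∩ {γ | f γ = f γ}) ∩ E (f γ) := ⟨⟨hγT, rfl⟩, hγΔ.2 (f γ) (hf γ hγT)⟩
  exact Set.eq_empty_iff_forall_notMem.1 (hE2 (f γ)) γ hmem

theorem club_tail (hC : IsClubIn C θ) {b : Ordinal} (hb : b < θ) :
    IsClubIn (C ∩ Ici b) θ := by
  refine ⟨fun x hx => hC.1 hx.1, ?_, ?_⟩
  · intro α hα
    obtain ⟨β, hβC, hβge⟩ := hC.2.1 (max α b) (max_lt hα hb)
    exact ⟨β, ⟨hβC, (le_max_right _ _).trans hβge⟩, (le_max_left _ _).trans hβge⟩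
  · intro α hα hα0 hsup
    have hne : ((C ∩ Ici b) ∩ Iio α).Nonempty := by
      by_contra hemp
      rw [Set.not_nonempty_iff_eq_empty] at hemp
      rw [hemp, csSup_empty] at hsup
      exact hα0 (hsup.symm.trans rfl)
    obtain ⟨e, ⟨heC, heb⟩, heα⟩ := hne
    have hsub : (C ∩ Ici b) ∩ Iio α ⊆ C ∩ Iio α := fun y hy => ⟨hy.1.1, hy.2⟩
    have hCsup : sSup (C ∩ Iio α) = α := by
      refine le_antisymm (csSup_le ⟨e, heC, heα⟩ (fun y hy => hy.2.le)) ?_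
      conv_lhs => rw [← hsup]
      exact csSup_le_csSup ⟨α, fun y hy => hy.2.le⟩ ⟨e, ⟨heC, heb⟩, heα⟩ hsub
    exact ⟨hC.2.2 α hα hα0 hCsup, Set.mem_Ici.2 ((Set.mem_Ici.1 heb).trans heα.le)⟩

theorem club_inter (hreg : κ.IsRegular) (hκ : ℵ₀ < κ)
    (hC : IsClubIn C κ.ord) (hD : IsClubIn D κ.ord) : IsClubIn (C ∩ D) κ.ord := by
  have hω : (2 : Ordinal) < κ.ord := by
    have h1 : (ω : Ordinal) ≤ κ.ord := by
      rw [← Cardinal.ord_aleph0]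
      exact Cardinal.ord_le_ord.2 hκ.le
    exact lt_of_lt_of_le (by exact_mod_cast Ordinal.nat_lt_omega0 2) h1
  refine ⟨fun x hx => hC.1 hx.1, ?_, ?_⟩
  · intro α hα
    set Cc : Ordinal → Set Ordinal := fun δ => if δ = 0 then C else D with hCcd
    have hCc : ∀ δ, IsClubIn (Cc δ) κ.ord := by
      intro δ; rw [hCcd]; by_cases h : δ = 0 <;> simp [h, hC, hD]
    obtain ⟨β, hβge, hβθ, hβmem⟩ := clubs_inter_unbounded hreg hκ Cc hCc hω hα
    have hβC : β ∈ C := by simpa [hCcd] using hβmem 0 (by norm_num)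
    have hβD : β ∈ D := by simpa [hCcd] using hβmem 1 (by norm_num)
    exact ⟨β, ⟨hβC, hβD⟩, hβge⟩
  · intro α hα hα0 hsup
    have hne : ((C ∩ D) ∩ Iio α).Nonempty := by
      by_contra hemp
      rw [Set.not_nonempty_iff_eq_empty] at hemp
      rw [hemp, csSup_empty] at hsup
      exact hα0 (hsup.symm.trans rfl)
    have key : ∀ E : Set Ordinal, IsClubIn E κ.ord → (C ∩ D) ∩ Iio α ⊆ E ∩ Iio α → α ∈ E := by
      intro E hE hsub
      apply hE.2.2 α hα hα0
      refine le_antisymm (csSup_le (hne.mono hsub) (fun y hy => hy.2.le)) ?_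
      conv_lhs => rw [← hsup]
      exact csSup_le_csSup ⟨α, fun y hy => hy.2.le⟩ hne hsub
    exact ⟨key C hC (fun y hy => ⟨hy.1.1, hy.2⟩), key D hD (fun y hy => ⟨hy.1.2, hy.2⟩)⟩

theorem skw1_stationary (hreg : κ.IsRegular) (hκ1 : Cardinal.aleph 1 < κ) :
    IsStationaryIn (Skw1 κ) κ.ord := by
  intro D hD
  have hθlim : Order.IsSuccLimit κ.ord := Cardinal.isSuccLimit_ord hreg.aleph0_le
  set s : Set Ordinal := D ∪ Ici κ.ord with hs
  have hsunb : ¬ BddAbove s := by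
    rintro ⟨b, hb⟩
    have h1 : max κ.ord (succ b) ∈ s := Or.inr (Set.mem_Ici.2 (le_max_left _ _))
    exact absurd (hb h1) (not_le.2 ((lt_succ b).trans_le (le_max_right _ _)))
  set e : Ordinal → Ordinal := fun i => enumOrd s i with he
  set o₁ : Ordinal := (Cardinal.aleph 1).ord with ho₁def
  have ho₁lim : Order.IsSuccLimit o₁ := Cardinal.isSuccLimit_ord (aleph0_le_aleph 1)
  have key : ∀ i < o₁, e i < κ.ord := by
    intro i
    induction i using Ordinal.induction with
    | h i IH =>
      intro hi
      have hbs : Ordinal.bsup i (fun j hj => e j) < κ.ord := by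
        refine Ordinal.bsup_lt_ord ?_ (fun j hj => IH j hj (hj.trans hi))
        rw [hreg.cof_eq]
        refine lt_of_le_of_lt ?_ hκ1
        have := Ordinal.card_le_card hi.le
        rwa [ho₁def, Cardinal.card_ord] at this
      obtain ⟨d, hd, hdge⟩ := hD.2.1 (succ (Ordinal.bsup i fun j _ => e j))
        (hθlim.succ_lt hbs)
      have hle : e i ≤ d := by
        refine Ordinal.enumOrd_le_of_forall_lt (Or.inl hd) (fun j hj => ?_)
        exact lt_of_le_of_lt (Ordinal.le_bsup _ j hj) (lt_of_lt_of_le (lt_succ _) hdge)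
      exact lt_of_le_of_lt hle (hD.1 hd)
  have keyD : ∀ i < o₁, e i ∈ D := by
    intro i hi
    rcases Ordinal.enumOrd_mem hsunb i with h | h
    · exact h
    · exact absurd (key i hi) (not_lt.2 h)
  set α : Ordinal := Ordinal.bsup o₁ (fun i _ => e i) with hαdef
  have hαθ : α < κ.ord := by
    refine Ordinal.bsup_lt_ord ?_ key
    rw [hreg.cof_eq, ho₁def, Cardinal.card_ord]
    exact hκ1
  have hemono : StrictMono e := Ordinal.enumOrd_strictMono hsunb
  have hlt : ∀ i, i < o₁ → e i < α := fun i hi =>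
    lt_of_lt_of_le (hemono (lt_succ i)) (Ordinal.le_bsup _ (succ i) (ho₁lim.succ_lt hi))
  have hαD : α ∈ D := by
    set R : Set Ordinal := e '' (Iio o₁) with hR
    have hRne : R.Nonempty := ⟨e 0, 0, ho₁lim.pos, rfl⟩
    have hbdd : BddAbove R := ⟨α, by rintro y ⟨i, hi, rfl⟩; exact (hlt i hi).le⟩
    have hRsup : sSup R = α := by
      apply le_antisymm (csSup_le hRne (by rintro y ⟨i, hi, rfl⟩; exact (hlt i hi).le))
      rw [hαdef]
      exact Ordinal.bsup_le (fun i hi => le_csSup hbdd ⟨i, hi, rfl⟩)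
    have := club_sSup_mem hD (by rintro y ⟨i, hi, rfl⟩; exact keyD i hi) hRne
      (by rw [hRsup]; exact hαθ) (by rw [hRsup]; rintro ⟨i, hi, hei⟩; exact (hlt i hi).ne hei)
    rwa [hRsup] at this
  have hcof : α.cof = Cardinal.aleph 1 := by
    apply le_antisymm
    · have := Ordinal.cof_bsup_le (f := fun i (_ : i < o₁) => e i) hlt
      rwa [← hαdef, ho₁def, Cardinal.card_ord] at this
    · rw [← Cardinal.isRegular_aleph_one.cof_eq]
      refine Ordinal.le_cof_iff_blsub.2 ?_
      intro o f hf
      have hex : ∀ j (hj : j < o), ∃ i, ∃ _ : i < o₁, f j hj < e i := by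
        intro j hj
        have : f j hj < α := hf ▸ Ordinal.lt_blsub f j hj
        exact (Ordinal.lt_bsup _).1 this
      choose g hg using hex
      have hblsub : Ordinal.blsub o (fun j hj => g j hj) = o₁ := by
        apply le_antisymm
        · exact Ordinal.blsub_le (fun j hj => (hg j hj).1)
        · apply le_of_forall_lt
          intro i hi
          obtain ⟨j, hj, hle⟩ := Ordinal.lt_blsub_iff.1 ((hf ▸ hlt i hi) : e i < Ordinal.blsub o f)
          have : e i < e (g j hj) := lt_of_le_of_lt hle (hg j hj).2
          exact lt_of_lt_of_le (hemono.lt_iff_lt.1 this) ((Ordinal.lt_blsub _ j hj).le)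
      have h2 := Ordinal.cof_blsub_le (fun j hj => g j hj)
      rw [hblsub] at h2
      exact h2
  exact ⟨α, ⟨hαθ, hcof⟩, hαD⟩

end Aux

open Ordinal Order in
/-- Let `κ > ℵ₁` be regular and `(u_β : β < κ)` a coherent sequence, and
`S*_α = {β < κ : α ∈ u_β}`.  Suppose for some `β*` the set `S*_{β*} ∩ S^κ_{ω₁}` is
non-stationary, witnessed by a club `C` disjoint from it.  Then (by Fodor's lemma
applied to `γ ↦ min (u_γ ∖ β*)`) there are `δ* > β*` with `β* ∉ u_{δ*}` and a
stationary `S ⊆ S^κ_{ω₁} ∩ C` with `S ⊆ S*_{δ*}`; in particular `S*_{δ*} ∩ S^κ_{ω₁}`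
is stationary and `S*_{δ*} ∩ S*_{β*} = ∅`. -/
theorem stmt_14 (κ : Cardinal) (hreg : κ.IsRegular) (hκ : Cardinal.aleph 1 < κ)
    (u : Ordinal → Set Ordinal)
    (hsub : ∀ β < κ.ord, u β ⊆ Set.Iio β)
    (hclosed : ∀ β < κ.ord, ∀ α < β, α ≠ 0 → sSup (u β ∩ Set.Iio α) = α → α ∈ u β)
    (hunb : ∀ β < κ.ord, Order.IsSuccLimit β → ∀ α < β, ∃ γ ∈ u β, α ≤ γ)
    (hcoh : ∀ β < κ.ord, ∀ γ ∈ u β, u γ = u β ∩ Set.Iio γ)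
    (βs : Ordinal) (hβs : βs < κ.ord)
    (C : Set Ordinal) (hC : IsClubIn C κ.ord)
    (hCdisj : {β | β < κ.ord ∧ βs ∈ u β} ∩ Skw1 κ ∩ C = ∅) :
    ∃ (δs : Ordinal) (S : Set Ordinal),
      βs < δs ∧ δs < κ.ord ∧ βs ∉ u δs ∧
      S ⊆ Skw1 κ ∩ C ∧ IsStationaryIn S κ.ord ∧
      S ⊆ {β | β < κ.ord ∧ δs ∈ u β} ∧
      IsStationaryIn ({β | β < κ.ord ∧ δs ∈ u β} ∩ Skw1 κ) κ.ord ∧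
      {β | β < κ.ord ∧ δs ∈ u β} ∩ {β | β < κ.ord ∧ βs ∈ u β} = ∅ := by
  have hℵ0 : ℵ₀ < κ := lt_of_le_of_lt (aleph0_le_aleph 1) hκ
  have hθlim : Order.IsSuccLimit κ.ord := Cardinal.isSuccLimit_ord hreg.aleph0_le
  set T : Set Ordinal := Skw1 κ ∩ (C ∩ Ici (succ βs)) with hTdef
  have hC' : IsClubIn (C ∩ Ici (succ βs)) κ.ord := club_tail hC (hθlim.succ_lt hβs)
  have hTstat : IsStationaryIn T κ.ord := by
    intro E hE
    obtain ⟨γ, hγ1, hγ2⟩ := skw1_stationary hreg hκ _ (club_inter hreg hℵ0 hC' hE)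
    exact ⟨γ, ⟨hγ1, hγ2.1⟩, hγ2.2⟩
  have hTsub : T ⊆ Iio κ.ord := fun γ hγ => hγ.1.1
  have hTlim : ∀ γ ∈ T, Order.IsSuccLimit γ := by
    intro γ hγ
    rcases Ordinal.zero_or_succ_or_isSuccLimit γ with h0 | ⟨a, ha⟩ | hl
    · exfalso
      have := hγ.1.2
      rw [h0, Ordinal.cof_zero] at this
      exact (aleph0_pos.trans_le (aleph0_le_aleph 1)).ne this
    · exfalso
      have := hγ.1.2
      rw [← ha, Ordinal.cof_succ] at this
      exact absurd this (ne_of_lt (lt_of_lt_of_le one_lt_aleph0 (aleph0_le_aleph 1)))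
    · exact hl
  have hTβ : ∀ γ ∈ T, βs < γ := fun γ hγ => lt_of_lt_of_le (lt_succ βs) hγ.2.2
  have hne : ∀ γ ∈ T, {x | x ∈ u γ ∧ βs ≤ x}.Nonempty := by
    intro γ hγ
    obtain ⟨d, hd, hdge⟩ := hunb γ (hTsub hγ) (hTlim γ hγ) βs (hTβ γ hγ)
    exact ⟨d, hd, hdge⟩
  set f : Ordinal → Ordinal := fun γ => sInf {x | x ∈ u γ ∧ βs ≤ x} with hfdef
  have hfmem : ∀ γ ∈ T, f γ ∈ u γ ∧ βs ≤ f γ := fun γ hγ => csInf_mem (hne γ hγ)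
  have hfreg : ∀ γ ∈ T, f γ < γ := fun γ hγ => hsub γ (hTsub hγ) (hfmem γ hγ).1
  obtain ⟨δs, hS⟩ := fodor hreg hℵ0 hTstat f hfreg
  set S : Set Ordinal := T ∩ {γ | f γ = δs} with hSdef
  obtain ⟨γ₀, hγ₀, -⟩ := hS (Iio κ.ord) club_Iio
  have hγ₀T : γ₀ ∈ T := hγ₀.1
  have hfγ₀ : f γ₀ = δs := hγ₀.2
  have hδsu : δs ∈ u γ₀ := hfγ₀ ▸ (hfmem _ hγ₀T).1
  have hδsβ : βs ≤ δs := hfγ₀ ▸ (hfmem _ hγ₀T).2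
  have hγ₀θ : γ₀ < κ.ord := hTsub hγ₀T
  have hkey : ∀ γ ∈ T, βs ∉ u γ := by
    intro γ hγ hmem
    have : γ ∈ {β | β < κ.ord ∧ βs ∈ u β} ∩ Skw1 κ ∩ C := ⟨⟨⟨hTsub hγ, hmem⟩, hγ.1⟩, hγ.2.1⟩
    rw [hCdisj] at this
    exact this
  have hβδ : βs < δs := lt_of_le_of_ne hδsβ (fun h => hkey γ₀ hγ₀T (h ▸ hδsu))
  have hδθ : δs < κ.ord := lt_trans (hfγ₀ ▸ hfreg γ₀ hγ₀T) hγ₀θ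
  have hucoh : u δs = u γ₀ ∩ Iio δs := hcoh γ₀ hγ₀θ δs hδsu
  have hβnu : βs ∉ u δs := fun h => hkey γ₀ hγ₀T (hucoh ▸ h).1
  have hSsub2 : S ⊆ {β | β < κ.ord ∧ δs ∈ u β} := fun γ hγ =>
    ⟨hTsub hγ.1, hγ.2 ▸ (hfmem γ hγ.1).1⟩
  refine ⟨δs, S, hβδ, hδθ, hβnu, fun γ hγ => ⟨hγ.1.1, hγ.1.2.1⟩, hS, hSsub2, ?_, ?_⟩
  · intro E hE
    obtain ⟨γ, hγS, hγE⟩ := hS E hE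
    exact ⟨γ, ⟨hSsub2 hγS, hγS.1.1⟩, hγE⟩
  · rw [Set.eq_empty_iff_forall_notMem]
    rintro β ⟨⟨hβθ, hδβ⟩, -, hββ⟩
    exact hβnu ((hcoh β hβθ δs hδβ) ▸ (⟨hββ, hβδ⟩ : βs ∈ u β ∩ Iio δs))
end

section
/- Let κ be regular uncountable and let T be the tree of functions p : α+1 → P(κ) (α < κ) satisfying conditions (1)-(4) of the first tree construction, ordered by extension. Then T is normal: for every p ∈ T and every α < κ there exists q ∈ T extending p with dom q ≥ α. -/
open Cardinal Set Classical

noncomputable section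

/-- A condition is coded as `p = (α, P)` with `P : Ordinal → Set Ordinal`
(representing `p : α + 1 → 𝒫(κ)`, with `P β = ∅` for `β > α`).
`uSet p β = p(β)` if `p(β)` is a closed subset of `β`, and `∅` otherwise. -/
def uSet (p : Ordinal × (Ordinal → Set Ordinal)) (β : Ordinal) : Set Ordinal :=
  if p.2 β ⊆ Set.Iio β ∧ (∀ s ⊆ p.2 β, s.Nonempty → sSup s < β → sSup s ∈ p.2 β) then
    p.2 β else ∅

/-- `statSet κ p β = p(β)` if `p(β)` is stationary in `κ`, and `∅` otherwise. -/
def statSet (κ : Ordinal) (p : Ordinal × (Ordinal → Set Ordinal))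
    (β : Ordinal) : Set Ordinal :=
  if IsStationaryIn (p.2 β) κ then p.2 β else ∅

/-- The first tree `T` of Section 4: `p ∈ T` iff conditions (1)–(4) hold whenever
`γ < β ≤ α(p)`. -/
def FirstTree (κ : Ordinal) : Set (Ordinal × (Ordinal → Set Ordinal)) :=
  {p | p.1 < κ ∧ (∀ β, p.1 < β → p.2 β = ∅) ∧
    ∀ γ β, γ < β → β ≤ p.1 →
      ((uSet p β = ∅ → statSet κ p β ≠ ∅) ∧
       (γ ∈ uSet p β → uSet p γ = uSet p β ∩ Set.Iio γ) ∧
       (Order.IsSuccLimit β → ∀ α' < β, ∃ γ' ∈ uSet p β, α' ≤ γ') ∧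
       (γ ∈ uSet p β → Order.IsSuccLimit γ → γ ∉ statSet κ p (sInf (uSet p γ))))}

lemma uSet_congr' {p q : Ordinal × (Ordinal → Set Ordinal)} {β : Ordinal}
    (h : p.2 β = q.2 β) : uSet p β = uSet q β := by
  unfold uSet; rw [h]

lemma statSet_congr' {κ : Ordinal} {p q : Ordinal × (Ordinal → Set Ordinal)} {β : Ordinal}
    (h : p.2 β = q.2 β) : statSet κ p β = statSet κ q β := by
  unfold statSet; rw [h]

lemma uSet_subset_Iio (p : Ordinal × (Ordinal → Set Ordinal)) (β : Ordinal) :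
    uSet p β ⊆ Set.Iio β := by
  unfold uSet; split_ifs with h
  exacts [h.1, Set.empty_subset _]

/-- Let `κ` be regular uncountable.  The first tree `T`, ordered by extension, is
normal: every `p ∈ T` has extensions `q ∈ T` with `dom q` arbitrarily large
below `κ`. -/
theorem stmt_16 (κ : Cardinal) (hreg : κ.IsRegular) (hunc : ℵ₀ < κ) :
    ∀ p ∈ FirstTree κ.ord, ∀ α < κ.ord,
      ∃ q ∈ FirstTree κ.ord, (p.1 ≤ q.1 ∧ ∀ β ≤ p.1, q.2 β = p.2 β) ∧ α ≤ q.1 := by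
  intro p hp α hα
  rcases le_or_gt α p.1 with hle | hlt
  · exact ⟨p, hp, ⟨le_rfl, fun _ _ => rfl⟩, hle⟩
  obtain ⟨hp1, hp2, hp3⟩ := hp
  have hclim : Order.IsSuccLimit κ.ord := Cardinal.isSuccLimit_ord hreg.aleph0_le
  have hsucc : ∀ x, x < κ.ord → x + 1 < κ.ord := fun x hx => by
    rw [Ordinal.add_one_eq_succ]; exact hclim.succ_lt hx
  -- the stationary "filler" set
  set S : Set Ordinal := Set.Ioo α κ.ord with hSdef
  have hA1 : α + 1 ∈ S := ⟨lt_add_one α, hsucc α hα⟩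
  have hSstat : IsStationaryIn S κ.ord := by
    intro C hC
    obtain ⟨β, hβC, hβge⟩ := hC.2.1 (α + 1) (hsucc α hα)
    exact ⟨β, ⟨lt_of_lt_of_le (lt_add_one α) hβge, hC.1 hβC⟩, hβC⟩
  have h12 : p.1 + 1 < p.1 + 2 := (add_lt_add_iff_left p.1).2 (one_lt_two : (1:Ordinal) < 2)
  have h112 : p.1 + 1 + 1 = p.1 + 2 := by rw [add_assoc, one_add_one_eq_two]
  -- the extension
  set Q : Ordinal → Set Ordinal := fun δ =>
    if δ ≤ p.1 then p.2 δ
    else if α < δ then ∅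
    else if δ = p.1 + 1 ∨ δ = p.1 + 2 then S
    else Set.Ioo (p.1 + 1) δ with hQdef
  have hQold : ∀ δ, δ ≤ p.1 → Q δ = p.2 δ := by
    intro δ h; simp only [hQdef]; rw [if_pos h]
  have hQhigh : ∀ δ, α < δ → Q δ = ∅ := by
    intro δ h
    simp only [hQdef]
    rw [if_neg (not_le.mpr (hlt.trans h)), if_pos h]
  have hQS : ∀ δ, p.1 < δ → δ ≤ α → (δ = p.1 + 1 ∨ δ = p.1 + 2) → Q δ = S := by
    intro δ h1 h2 h3
    simp only [hQdef]
    rw [if_neg (not_le.mpr h1), if_neg (not_lt.mpr h2), if_pos h3]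
  have hQI : ∀ δ, p.1 + 2 < δ → δ ≤ α → Q δ = Set.Ioo (p.1 + 1) δ := by
    intro δ h1 h2
    have hne : ¬(δ = p.1 + 1 ∨ δ = p.1 + 2) := by
      rintro (rfl | rfl)
      · exact absurd (h12.trans h1) (lt_irrefl _)
      · exact absurd h1 (lt_irrefl _)
    simp only [hQdef]
    rw [if_neg (not_le.mpr (lt_trans (lt_trans (lt_add_one p.1) h12) h1)),
      if_neg (not_lt.mpr h2), if_neg hne]
  -- uSet at filler levels is empty
  have huS : ∀ δ, δ ≤ α → Q δ = S → uSet (α, Q) δ = ∅ := by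
    intro δ hδα hQδ
    have h2 : (α, Q).2 δ = S := hQδ
    unfold uSet
    rw [h2, if_neg]
    rintro ⟨h1, -⟩
    have := h1 hA1
    simp only [Set.mem_Iio] at this
    exact absurd this (not_lt.mpr (le_trans hδα (le_of_lt (lt_add_one α))))
  -- uSet at interval levels is the interval
  have huI : ∀ δ, p.1 + 2 < δ → δ ≤ α → uSet (α, Q) δ = Set.Ioo (p.1 + 1) δ := by
    intro δ h1 h2
    have hQδ : (α, Q).2 δ = Set.Ioo (p.1 + 1) δ := hQI δ h1 h2
    unfold uSet
    rw [hQδ, if_pos]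
    constructor
    · exact fun x hx => hx.2
    · intro s hs hne hlt
      obtain ⟨x, hx⟩ := hne
      have hbdd : BddAbove s := ⟨δ, fun y hy => (hs hy).2.le⟩
      have hxle : x ≤ sSup s := le_csSup hbdd hx
      exact ⟨lt_of_lt_of_le (hs hx).1 hxle, hlt⟩
  -- statSet at filler levels is S
  have hstatS : ∀ δ, Q δ = S → statSet κ.ord (α, Q) δ = S := by
    intro δ hQδ
    have h2 : (α, Q).2 δ = S := hQδ
    unfold statSet
    rw [h2, if_pos hSstat]
  refine ⟨(α, Q), ⟨hα, hQhigh, ?_⟩, ⟨hlt.le, fun β hβ => hQold β hβ⟩, le_rfl⟩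
  intro γ β hγβ hβα
  rcases le_or_gt β p.1 with hβp | hpβ
  · -- old levels: everything agrees with p
    have hγp : γ ≤ p.1 := le_of_lt (lt_of_lt_of_le hγβ hβp)
    have e1 : uSet (α, Q) β = uSet p β := uSet_congr' (hQold β hβp)
    have e2 : uSet (α, Q) γ = uSet p γ := uSet_congr' (hQold γ hγp)
    have e3 : statSet κ.ord (α, Q) β = statSet κ.ord p β := statSet_congr' (hQold β hβp)
    have hinf : sInf (uSet p γ) ≤ p.1 := by
      rcases Set.eq_empty_or_nonempty (uSet p γ) with h | h
      · rw [h, Ordinal.sInf_empty]; exact bot_le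
      · exact le_of_lt (lt_of_lt_of_le (uSet_subset_Iio p γ (csInf_mem h)) hγp)
    have e4 : statSet κ.ord (α, Q) (sInf (uSet p γ)) = statSet κ.ord p (sInf (uSet p γ)) :=
      statSet_congr' (hQold _ hinf)
    simp only [e1, e2, e3, e4]
    exact hp3 γ β hγβ hβp
  · by_cases hss : β = p.1 + 1 ∨ β = p.1 + 2
    · -- filler levels
      have hQβ : Q β = S := hQS β hpβ hβα hss
      have huβ : uSet (α, Q) β = ∅ := huS β hβα hQβ
      have hsβ : statSet κ.ord (α, Q) β = S := hstatS β hQβ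
      refine ⟨?_, ?_, ?_, ?_⟩
      · intro _; rw [hsβ]; exact Set.Nonempty.ne_empty ⟨α + 1, hA1⟩
      · intro hγ; rw [huβ] at hγ; exact absurd hγ (Set.notMem_empty γ)
      · intro hβlim
        exfalso
        rcases hss with rfl | rfl
        · have := hβlim.succ_lt (lt_add_one p.1)
          rw [← Ordinal.add_one_eq_succ] at this
          exact lt_irrefl _ this
        · have := hβlim.succ_lt h12
          rw [← Ordinal.add_one_eq_succ, h112] at this
          exact lt_irrefl _ this
      · intro hγ _; rw [huβ] at hγ; exact absurd hγ (Set.notMem_empty γ)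
    · -- interval levels
      push_neg at hss
      have h2β : p.1 + 2 < β := by
        have h1 : p.1 + 1 ≤ β := Order.add_one_le_iff.mpr hpβ
        have h1' : p.1 + 1 < β := lt_of_le_of_ne h1 (Ne.symm hss.1)
        have h2 : p.1 + 2 ≤ β := by rw [← h112]; exact Order.add_one_le_iff.mpr h1'
        exact lt_of_le_of_ne h2 (Ne.symm hss.2)
      have huβ : uSet (α, Q) β = Set.Ioo (p.1 + 1) β := huI β h2β hβα
      refine ⟨?_, ?_, ?_, ?_⟩
      · intro h
        rw [huβ] at h
        exact absurd (⟨h12, h2β⟩ : p.1 + 2 ∈ Set.Ioo (p.1 + 1) β)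
          (Set.eq_empty_iff_forall_notMem.mp h _)
      · intro hγmem
        rw [huβ] at hγmem
        obtain ⟨hγ1, hγ2⟩ := hγmem
        have hγ2' : p.1 + 2 ≤ γ := by rw [← h112]; exact Order.add_one_le_iff.mpr hγ1
        have hγα : γ ≤ α := le_of_lt (lt_of_lt_of_le hγβ hβα)
        rcases eq_or_lt_of_le hγ2' with heq | hlt'
        · -- γ = p.1 + 2 : both sides empty
          have huγ : uSet (α, Q) γ = ∅ :=
            huS γ hγα (hQS γ (heq ▸ (lt_trans (lt_add_one p.1) h12)) hγα (Or.inr heq.symm))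
          rw [huγ, huβ]
          symm
          rw [Set.eq_empty_iff_forall_notMem]
          rintro x ⟨⟨hx1, -⟩, hx2⟩
          have : p.1 + 2 ≤ x := by rw [← h112]; exact Order.add_one_le_iff.mpr hx1
          rw [← heq] at hx2
          exact absurd (lt_of_le_of_lt this hx2) (lt_irrefl _)
        · have huγ : uSet (α, Q) γ = Set.Ioo (p.1 + 1) γ := huI γ hlt' hγα
          rw [huγ, huβ, Set.Ioo_inter_Iio, min_eq_right (le_of_lt hγ2)]
      · intro hβlim α' hα'
        refine ⟨max α' (p.1 + 2), ?_, le_max_left _ _⟩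
        rw [huβ]
        exact ⟨lt_of_lt_of_le h12 (le_max_right _ _), max_lt hα' h2β⟩
      · intro hγmem hγlim
        rw [huβ] at hγmem
        obtain ⟨hγ1, hγ2⟩ := hγmem
        have hγ2' : p.1 + 2 ≤ γ := by rw [← h112]; exact Order.add_one_le_iff.mpr hγ1
        have hγα : γ ≤ α := le_of_lt (lt_of_lt_of_le hγβ hβα)
        have hγne : p.1 + 2 ≠ γ := by
          rintro rfl
          have := hγlim.succ_lt hγ1
          rw [← Ordinal.add_one_eq_succ, h112] at this
          exact lt_irrefl _ this
        have hlt' : p.1 + 2 < γ := lt_of_le_of_ne hγ2' hγne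
        have huγ : uSet (α, Q) γ = Set.Ioo (p.1 + 1) γ := huI γ hlt' hγα
        have hinf : sInf (uSet (α, Q) γ) = p.1 + 2 := by
          rw [huγ]
          refine le_antisymm (csInf_le (OrderBot.bddBelow _) ⟨h12, hlt'⟩) ?_
          refine le_csInf ⟨p.1 + 2, ⟨h12, hlt'⟩⟩ ?_
          intro x hx
          rw [← h112]
          exact Order.add_one_le_iff.mpr hx.1
        rw [hinf]
        have hQ2 : Q (p.1 + 2) = S :=
          hQS _ (lt_trans (lt_add_one p.1) h12) (le_of_lt (lt_of_lt_of_le hlt' hγα)) (Or.inr rfl)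
        rw [hstatS _ hQ2]
        rintro ⟨hc, -⟩
        exact absurd hc (not_lt.mpr hγα)

end
end
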